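/- arXiv:2402.11852 — 7 statements merged into one kernel-verified Lean document; each statement's English description precedes it below -/
import Mathlib

section
/- For every pair (y, Ī) consisting of y ∈ 2^ω and an interval partition Ī of ω, the set M(y, Ī) is meager in the Cantor space 2^ω; and conversely, for every meager set A ⊆ 2^ω there exists such a pair (y, Ī) with A ⊆ M(y, Ī). -/
/-- The set `M(y, Ī)` of `x ∈ 2^ω` such that for all but finitely many `n`,
`x↾I_n ≠ y↾I_n`, where the interval partition `Ī` is coded by a strictly increasing
function `f : ℕ → ℕ` with `f 0 = 0` and `I_n = [f n, f (n+1))`. -/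
def MSet (y : ℕ → Bool) (f : ℕ → ℕ) : Set (ℕ → Bool) :=
  { x | ∃ m : ℕ, ∀ n ≥ m, ∃ i : ℕ, f n ≤ i ∧ i < f (n + 1) ∧ x i ≠ y i }

open Set

/-- Any open set containing `z` contains a cylinder around `z`. -/
lemma cyl_lemma {D : Set (ℕ → Bool)} (hD : IsOpen D) {z : ℕ → Bool} (hz : z ∈ D) :
    ∃ N : ℕ, ∀ x : ℕ → Bool, (∀ i < N, x i = z i) → x ∈ D := by
  obtain ⟨I, u, hu, hsub⟩ := isOpen_pi_iff.mp hD z hz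
  refine ⟨I.sup id + 1, fun x hx => hsub ?_⟩
  intro i hi
  have : i < I.sup id + 1 := Nat.lt_succ_of_le (Finset.le_sup (f := id) hi)
  rw [hx i this]
  exact (hu i hi).2

lemma isOpen_cyl (z : ℕ → Bool) (N : ℕ) : IsOpen {x : ℕ → Bool | ∀ i < N, x i = z i} := by
  have : {x : ℕ → Bool | ∀ i < N, x i = z i}
      = ⋂ i ∈ Finset.range N, {x : ℕ → Bool | x i = z i} := by
    ext x; simp
  rw [this]
  refine isOpen_biInter_finset fun i _ => ?_
  show IsOpen ((fun p : ℕ → Bool => p i) ⁻¹' {z i})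
  exact IsOpen.preimage (continuous_apply i) (isOpen_discrete ({z i} : Set Bool))

/-- Density step: extend any finite condition into an open dense set. -/
lemma dense_step {D : Set (ℕ → Bool)} (hDo : IsOpen D) (hDd : Dense D)
    (z : ℕ → Bool) (m : ℕ) :
    ∃ N, m ≤ N ∧ ∃ w : ℕ → Bool, (∀ i < m, w i = z i) ∧
      ∀ x : ℕ → Bool, (∀ i < N, x i = w i) → x ∈ D := by
  obtain ⟨p, hpD, hpC⟩ := hDd.exists_mem_open (isOpen_cyl z m) ⟨z, fun i _ => rfl⟩
  obtain ⟨N0, hN0⟩ := cyl_lemma hDo hpD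
  refine ⟨max N0 m, le_max_right _ _, p, fun i hi => hpC i hi, fun x hx => ?_⟩
  exact hN0 x fun i hi => hx i (lt_of_lt_of_le hi (le_max_left _ _))

lemma dense_step_list {D : Set (ℕ → Bool)} (hDo : IsOpen D) (hDd : Dense D)
    (m : ℕ) (L : List (Fin m → Bool)) :
    ∃ N, m ≤ N ∧ ∃ w : ℕ → Bool, ∀ σ ∈ L, ∀ x : ℕ → Bool,
      (∀ i : Fin m, x i = σ i) → (∀ i, m ≤ i → i < N → x i = w i) → x ∈ D := by
  induction L with
  | nil => exact ⟨m, le_refl m, fun _ => false, by simp⟩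
  | cons σ L ih =>
    obtain ⟨N, hmN, w, hw⟩ := ih
    set z : ℕ → Bool := fun i => if h : i < m then σ ⟨i, h⟩ else w i with hz
    obtain ⟨N', hNN', w', hw'z, hw'⟩ := dense_step hDo hDd z N
    refine ⟨N', le_trans hmN hNN', w', ?_⟩
    intro τ hτ x hxτ hxw'
    rcases List.mem_cons.mp hτ with h | h
    · subst h
      apply hw'
      intro i hi
      by_cases him : i < m
      · rw [hxτ ⟨i, him⟩, hw'z i (lt_of_lt_of_le him hmN)]
        simp [hz, him]
      · exact hxw' i (Nat.le_of_not_lt him) hi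
    · refine hw τ h x hxτ ?_
      intro i hmi hiN
      have hiN' : i < N' := lt_of_lt_of_le hiN hNN'
      rw [hxw' i hmi hiN', hw'z i hiN]
      simp [hz, Nat.not_lt_of_le hmi]

/-- Key step: for an open dense `D` and `m`, there is an interval `[m, N)` and values `w`
such that any `x` matching `w` on `[m, N)` lies in `D`, regardless of other coordinates. -/
lemma dense_step_all {D : Set (ℕ → Bool)} (hDo : IsOpen D) (hDd : Dense D) (m : ℕ) :
    ∃ N, m < N ∧ ∃ w : ℕ → Bool,
      ∀ x : ℕ → Bool, (∀ i, m ≤ i → i < N → x i = w i) → x ∈ D := by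
  classical
  obtain ⟨N, hmN, w, hw⟩ := dense_step_list hDo hDd m (Finset.univ : Finset (Fin m → Bool)).toList
  refine ⟨max N (m + 1), lt_of_lt_of_le (Nat.lt_succ_self m) (le_max_right _ _), w, ?_⟩
  intro x hx
  refine hw (fun i => x i) (Finset.mem_toList.mpr (Finset.mem_univ _)) x (fun i => rfl) ?_
  intro i hmi hiN
  exact hx i hmi (lt_of_lt_of_le hiN (le_max_left _ _))

theorem stmt6_dir1 (y : ℕ → Bool) (f : ℕ → ℕ) (hf0 : f 0 = 0) (hf : StrictMono f) :
    IsMeagre (MSet y f) := by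
  set S : ℕ → Set (ℕ → Bool) :=
    fun m => {x | ∀ n ≥ m, ∃ i, f n ≤ i ∧ i < f (n + 1) ∧ x i ≠ y i} with hS
  have hUnion : MSet y f = ⋃ m, S m := by
    ext x; simp [MSet, hS]
  rw [hUnion]
  apply isMeagre_iUnion
  intro m
  have hclosed : IsClosed (S m) := by
    rw [← isOpen_compl_iff]
    have hcompl : (S m)ᶜ = ⋃ n, ⋃ (_ : m ≤ n),
        {x : ℕ → Bool | ∀ i, f n ≤ i → i < f (n + 1) → x i = y i} := by
      ext x
      simp only [hS, mem_compl_iff, mem_setOf_eq, mem_iUnion, ge_iff_le]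
      push_neg
      tauto
    rw [hcompl]
    apply isOpen_iUnion; intro n; apply isOpen_iUnion; intro _
    have : {x : ℕ → Bool | ∀ i, f n ≤ i → i < f (n + 1) → x i = y i}
        = ⋂ i ∈ Finset.Ico (f n) (f (n + 1)), {x : ℕ → Bool | x i = y i} := by
      ext x; simp [Finset.mem_Ico]
    rw [this]
    refine isOpen_biInter_finset fun i _ => ?_
    show IsOpen ((fun p : ℕ → Bool => p i) ⁻¹' {y i})
    exact IsOpen.preimage (continuous_apply i) (isOpen_discrete ({y i} : Set Bool))
  have hint : interior (S m) = ∅ := by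
    rw [Set.eq_empty_iff_forall_notMem]
    intro x hx
    obtain ⟨N, hN⟩ := cyl_lemma isOpen_interior hx
    set n := max m N with hn
    classical
    set x' : ℕ → Bool := fun i => if f n ≤ i ∧ i < f (n + 1) then y i else x i with hx'
    have hx'S : x' ∈ S m := by
      apply interior_subset
      apply hN
      intro i hi
      have hiN : i < f n := lt_of_lt_of_le hi (le_trans (le_max_right m N) (hf.le_apply))
      simp [hx', Nat.not_le_of_lt hiN]
    obtain ⟨i, h1, h2, h3⟩ := hx'S n (le_max_left m N)
    apply h3
    simp [hx', h1, h2]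
  rw [isMeagre_iff_countable_union_isNowhereDense]
  exact ⟨{S m}, by simp [hclosed.isNowhereDense_iff, hint],
    countable_singleton _, by simp⟩

theorem stmt6_dir2 (A : Set (ℕ → Bool)) (hA : IsMeagre A) :
    ∃ (y : ℕ → Bool) (f : ℕ → ℕ), f 0 = 0 ∧ StrictMono f ∧ A ⊆ MSet y f := by
  classical
  rw [IsMeagre, mem_residual_iff] at hA
  obtain ⟨S, hSo, hSd, hSc, hSsub⟩ := hA
  -- enumerate `insert univ S`
  obtain ⟨e, he⟩ := (hSc.insert univ).exists_eq_range (insert_nonempty _ _)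
  have heo : ∀ n, IsOpen (e n) := by
    intro n
    have : e n ∈ insert univ S := he ▸ mem_range_self n
    rcases this with h | h
    · rw [h]; exact isOpen_univ
    · exact hSo _ h
  have hed : ∀ n, Dense (e n) := by
    intro n
    have : e n ∈ insert univ S := he ▸ mem_range_self n
    rcases this with h | h
    · rw [h]; exact dense_univ
    · exact hSd _ h
  -- decreasing open dense sets
  set D : ℕ → Set (ℕ → Bool) := fun n => ⋂ k ∈ Finset.range (n + 1), e k with hD
  have hDo : ∀ n, IsOpen (D n) := fun n => isOpen_biInter_finset fun k _ => heo k
  have hDd : ∀ n, Dense (D n) := by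
    intro n
    induction n with
    | zero => simpa [hD] using hed 0
    | succ n ih =>
      have : D (n + 1) = e (n + 1) ∩ D n := by
        simp only [hD, Finset.range_add_one (n := n + 1)]
        rw [Finset.set_biInter_insert]
      rw [this]
      exact Dense.inter_of_isOpen_left (hed (n + 1)) ih (heo (n + 1))
  have hDsub : ∀ k n, k ≤ n → D n ⊆ e k := by
    intro k n hkn x hx
    have := mem_iInter.mp hx k
    exact mem_iInter.mp this (Finset.mem_range.mpr (Nat.lt_succ_of_le hkn))
  -- choose interval extensions
  have key : ∀ n m, ∃ p : ℕ × (ℕ → Bool), m < p.1 ∧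
      ∀ x : ℕ → Bool, (∀ i, m ≤ i → i < p.1 → x i = p.2 i) → x ∈ D n := by
    intro n m
    obtain ⟨N, hmN, w, hw⟩ := dense_step_all (hDo n) (hDd n) m
    exact ⟨(N, w), hmN, hw⟩
  choose g hg1 hg2 using key
  set F : ℕ → ℕ := fun n => Nat.rec 0 (fun k p => (g k p).1) n with hF
  have hF0 : F 0 = 0 := rfl
  have hFsucc : ∀ n, F (n + 1) = (g n (F n)).1 := fun n => rfl
  have hFmono : StrictMono F := by
    apply strictMono_nat_of_lt_succ
    intro n
    rw [hFsucc]
    exact hg1 n (F n)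
  -- block index
  set idx : ℕ → ℕ := fun i => Nat.findGreatest (fun n => F n ≤ i) i with hidx
  have hidx_eq : ∀ n i, F n ≤ i → i < F (n + 1) → idx i = n := by
    intro n i h1 h2
    have hni : n ≤ i := le_trans hFmono.le_apply h1
    have hle : n ≤ idx i := Nat.le_findGreatest hni h1
    rcases Nat.lt_or_ge n (idx i) with h | h
    · exfalso
      have hPidx : F (idx i) ≤ i := by
        have := Nat.findGreatest_spec (P := fun n => F n ≤ i) (m := 0) (n := i)
          (Nat.zero_le i) (by simp [hF0])
        exact this
      have : F (n + 1) ≤ F (idx i) := hFmono.monotone h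
      omega
    · omega
  set y : ℕ → Bool := fun i => (g (idx i) (F (idx i))).2 i with hy
  refine ⟨y, F, hF0, hFmono, ?_⟩
  intro x hxA
  have hx_not : ∃ k, x ∉ e k := by
    by_contra h
    push_neg at h
    have hxinter : x ∈ ⋂₀ insert univ S := by
      rw [he]
      exact fun t ht => by obtain ⟨n, rfl⟩ := ht; exact h n
    have : x ∈ ⋂₀ S := fun t ht => hxinter t (mem_insert_of_mem _ ht)
    exact hSsub this hxA
  obtain ⟨k, hk⟩ := hx_not
  refine ⟨k, fun n hn => ?_⟩
  by_contra hcon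
  push_neg at hcon
  have hxD : x ∈ D n := by
    apply hg2 n (F n)
    intro i h1 h2
    rw [← hFsucc] at h2
    have hyi : y i = (g n (F n)).2 i := by
      simp only [hy]
      rw [hidx_eq n i h1 h2]
    rw [hcon i h1 h2, hyi]
  exact hk (hDsub k n hn hxD)

/-- For every `y ∈ 2^ω` and interval partition `Ī` of `ω`, the set
`M(y, Ī)` is meager in the Cantor space; conversely every meager subset of `2^ω` is
contained in some `M(y, Ī)`. -/
theorem stmt6 :
    (∀ (y : ℕ → Bool) (f : ℕ → ℕ), f 0 = 0 → StrictMono f → IsMeagre (MSet y f)) ∧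
    (∀ A : Set (ℕ → Bool), IsMeagre A →
      ∃ (y : ℕ → Bool) (f : ℕ → ℕ), f 0 = 0 ∧ StrictMono f ∧ A ⊆ MSet y f) :=
  ⟨stmt6_dir1, stmt6_dir2⟩
end

section
/- Fix a sequence ε̄ = ⟨ε_n : n < ω⟩ of positive reals with ∑_n ε_n < ∞, and let Cn = ⟨Ω_ε̄, 2^ω, ⋫⟩ be the relational system where c̄ ⋫ y iff y ∉ N(c̄). Then Cn ≅_T C_{N(2^ω)}^⊥, where N(2^ω) is the ideal of subsets of 2^ω contained in a Borel set of Lb₂-measure zero and C_{N(2^ω)} = ⟨2^ω, N(2^ω), ∈⟩. In particular, 𝔟(Cn) = cov(N(2^ω)) and 𝔡(Cn) = non(N(2^ω)). -/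
open Cardinal

universe u v

/-- A set `F ⊆ X` is unbounded in the relational system `⟨X, Y, r⟩`:
no `y ∈ Y` satisfies `r x y` for all `x ∈ F`. -/
def RUnbounded {X : Type u} {Y : Type v} (r : X → Y → Prop) (F : Set X) : Prop :=
  ¬ ∃ y : Y, ∀ x ∈ F, r x y

/-- A set `E ⊆ Y` is dominating in the relational system `⟨X, Y, r⟩`. -/
def RDominating {X : Type u} {Y : Type v} (r : X → Y → Prop) (E : Set Y) : Prop :=
  ∀ x : X, ∃ y ∈ E, r x y

/-- The unbounding number `𝔟(R)` of the relational system `⟨X, Y, r⟩`. -/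
noncomputable def bNum {X : Type u} {Y : Type v} (r : X → Y → Prop) : Cardinal.{u} :=
  sInf { c | ∃ F : Set X, RUnbounded r F ∧ c = #F }

/-- The dominating number `𝔡(R)` of the relational system `⟨X, Y, r⟩`. -/
noncomputable def dNum {X : Type u} {Y : Type v} (r : X → Y → Prop) : Cardinal.{v} :=
  sInf { c | ∃ E : Set Y, RDominating r E ∧ c = #E }

/-- Tukey connection: `R ≼_T R'`. -/
def TukeyLE {X Y X' Y' : Type*} (r : X → Y → Prop) (r' : X' → Y' → Prop) : Prop :=
  ∃ (f : X → X') (g : Y' → Y), ∀ x y', r' (f x) y' → r x (g y')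

/-- `I` is an ideal of subsets of `X`. -/
def IsIdeal {X : Type u} (I : Set (Set X)) : Prop :=
  ∅ ∈ I ∧ (∀ A ∈ I, ∀ B ⊆ A, B ∈ I) ∧ (∀ A ∈ I, ∀ B ∈ I, A ∪ B ∈ I)

/-- `add(I)`, the additivity of `I`. -/
noncomputable def addIdeal {X : Type u} (I : Set (Set X)) : Cardinal.{u} :=
  sInf { c | ∃ F ⊆ I, ⋃₀ F ∉ I ∧ c = #F }

/-- `cof(I)`, the cofinality of `I`. -/
noncomputable def cofIdeal {X : Type u} (I : Set (Set X)) : Cardinal.{u} :=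
  sInf { c | ∃ D ⊆ I, (∀ A ∈ I, ∃ B ∈ D, A ⊆ B) ∧ c = #D }

/-- `non(I)`, the uniformity of `I`. -/
noncomputable def nonIdeal {X : Type u} (I : Set (Set X)) : Cardinal.{u} :=
  sInf { c | ∃ F : Set X, F ∉ I ∧ c = #F }

/-- `cov(I)`, the covering number of `I`. -/
noncomputable def covIdeal {X : Type u} (I : Set (Set X)) : Cardinal.{u} :=
  sInf { c | ∃ C ⊆ I, ⋃₀ C = Set.univ ∧ c = #C }

/-- The basic clopen set `[s] ⊆ 2^ω` of all sequences extending the finite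
binary string `s`. -/
def cyl (s : List Bool) : Set (ℕ → Bool) :=
  { x | ∀ i : Fin s.length, x i = s.get i }

/-- `[c] = ⋃_{s ∈ c} [s]` for a finite set `c` of finite binary strings. -/
def cylF (c : Finset (List Bool)) : Set (ℕ → Bool) :=
  ⋃ s ∈ c, cyl s

/-- `N(c̄) = ⋂_m ⋃_{n ≥ m} [c_n]`. -/
def NSet (cbar : ℕ → Finset (List Bool)) : Set (ℕ → Bool) :=
  { x | ∀ m : ℕ, ∃ n ≥ m, x ∈ cylF (cbar n) }

/-- The null ideal `N(μ)`: sets contained in a Borel set of `μ`-measure zero. -/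
def nullIdealOf (μ : MeasureTheory.Measure (ℕ → Bool)) : Set (Set (ℕ → Bool)) :=
  { A | ∃ B : Set (ℕ → Bool), MeasurableSet B ∧ A ⊆ B ∧ μ B = 0 }

/-- The set `Ω_ε̄` of codes of null sets. -/
def OmT (μ : MeasureTheory.Measure (ℕ → Bool)) (ε : ℕ → ℝ) : Type :=
  { cbar : ℕ → Finset (List Bool) // ∀ n, μ (cylF (cbar n)) < ENNReal.ofReal (ε n) }

/-- The relational system `Cn = ⟨Ω_ε̄, 2^ω, ⋫⟩`, where `c̄ ⋫ y` iff `y ∉ N(c̄)`. -/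
def CnRel (μ : MeasureTheory.Measure (ℕ → Bool)) (ε : ℕ → ℝ) :
    OmT μ ε → (ℕ → Bool) → Prop :=
  fun cbar y => y ∉ NSet cbar.1

/-- The dual `C_{N(2^ω)}^⊥ = ⟨N(2^ω), 2^ω, ∌⟩` of `C_{N(2^ω)} = ⟨2^ω, N(2^ω), ∈⟩`. -/
def CNperp (μ : MeasureTheory.Measure (ℕ → Bool)) :
    nullIdealOf μ → (ℕ → Bool) → Prop :=
  fun A y => y ∉ (A : Set (ℕ → Bool))


/-!
Sending a code `c̄` to the null set `N(c̄)` is a Tukey map `Cn → C_{N(2^ω)}^⊥`: `N(c̄)` is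
null by Borel–Cantelli, since `∑ ε_n < ∞`. Conversely every null set lies inside some `N(c̄)`.
Cover it by an open set `U` of small measure; the clopen sets `V_L`, unions of the cylinders of
length `L` inside `U`, increase to `U`, so along a fast sequence `L_k` the new parts
`V_{L_k} \ ⋃_{j<k} V_{L_j}` are finite unions of cylinders of measure below any prescribed `δ_k`,
and together they cover `U`. Interleaving such covers for each tail of `ε̄` (via `Nat.pair`) puts
every point of the null set into infinitely many `[c_n]`. The cardinal invariants are then those
of `C_{N(2^ω)}^⊥`, which are `cov` and `non` of the null ideal.
-/

open MeasureTheory Filter Set Topology PiNat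
open scoped ENNReal

section Tukey

variable {X X' : Type u} {Y Y' : Type v} {r : X → Y → Prop} {r' : X' → Y' → Prop}

lemma TukeyLE.exists_rUnbounded_mk_le (h : TukeyLE r r') {F : Set X} (hF : RUnbounded r F) :
    ∃ F' : Set X', RUnbounded r' F' ∧ #F' ≤ #F := by
  obtain ⟨f, g, hfg⟩ := h
  refine ⟨f '' F, ?_, mk_image_le⟩
  rintro ⟨y', hy'⟩
  exact hF ⟨g y', fun x hx => hfg x y' (hy' (f x) (mem_image_of_mem f hx))⟩

lemma TukeyLE.exists_rDominating_mk_le (h : TukeyLE r r') {E : Set Y'} (hE : RDominating r' E) :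
    ∃ E' : Set Y, RDominating r E' ∧ #E' ≤ #E := by
  obtain ⟨f, g, hfg⟩ := h
  refine ⟨g '' E, fun x => ?_, mk_image_le⟩
  obtain ⟨y', hy', hr⟩ := hE (f x)
  exact ⟨g y', mem_image_of_mem g hy', hfg x y' hr⟩

lemma bNum_eq_of_tukeyLE (h : TukeyLE r r') (h' : TukeyLE r' r) : bNum r = bNum r' := by
  refine csInf_eq_csInf_of_forall_exists_le ?_ ?_
  · rintro _ ⟨F, hF, rfl⟩
    obtain ⟨F', hF', hle⟩ := h.exists_rUnbounded_mk_le hF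
    exact ⟨_, ⟨F', hF', rfl⟩, hle⟩
  · rintro _ ⟨F, hF, rfl⟩
    obtain ⟨F', hF', hle⟩ := h'.exists_rUnbounded_mk_le hF
    exact ⟨_, ⟨F', hF', rfl⟩, hle⟩

lemma dNum_eq_of_tukeyLE (h : TukeyLE r r') (h' : TukeyLE r' r) : dNum r = dNum r' := by
  refine csInf_eq_csInf_of_forall_exists_le ?_ ?_
  · rintro _ ⟨E, hE, rfl⟩
    obtain ⟨E', hE', hle⟩ := h'.exists_rDominating_mk_le hE
    exact ⟨_, ⟨E', hE', rfl⟩, hle⟩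
  · rintro _ ⟨E, hE, rfl⟩
    obtain ⟨E', hE', hle⟩ := h.exists_rDominating_mk_le hE
    exact ⟨_, ⟨E', hE', rfl⟩, hle⟩

end Tukey

section NullIdeal

variable {μ : Measure (ℕ → Bool)}

lemma rUnbounded_CNperp_iff {F : Set (nullIdealOf μ)} :
    RUnbounded (CNperp μ) F ↔ ⋃₀ (Subtype.val '' F) = Set.univ := by
  simp [RUnbounded, CNperp, eq_univ_iff_forall]

lemma rDominating_CNperp_iff {E : Set (ℕ → Bool)} :
    RDominating (CNperp μ) E ↔ E ∉ nullIdealOf μ := by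
  constructor
  · intro hE hnull
    obtain ⟨y, hyE, hy⟩ := hE ⟨E, hnull⟩
    exact hy hyE
  · intro hE A
    by_contra! hA
    obtain ⟨B, hB, hAB, hB0⟩ := A.2
    exact hE ⟨B, hB, fun y hy => hAB (not_not.1 (hA y hy)), hB0⟩

lemma bNum_CNperp : bNum (CNperp μ) = covIdeal (nullIdealOf μ) := by
  refine csInf_eq_csInf_of_forall_exists_le ?_ ?_
  · rintro _ ⟨F, hF, rfl⟩
    refine ⟨_, ⟨Subtype.val '' F, ?_, rUnbounded_CNperp_iff.1 hF, rfl⟩, mk_image_le⟩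
    rintro _ ⟨A, -, rfl⟩
    exact A.2
  · rintro _ ⟨C, hC, hcov, rfl⟩
    refine ⟨_, ⟨Subtype.val ⁻¹' C, rUnbounded_CNperp_iff.2 ?_, rfl⟩,
      (mk_preimage_of_injective_of_subset_range _ _ Subtype.val_injective (by simpa)).le⟩
    rwa [image_preimage_eq_of_subset (by simpa)]

lemma dNum_CNperp : dNum (CNperp μ) = nonIdeal (nullIdealOf μ) := by
  simp only [dNum, nonIdeal, rDominating_CNperp_iff]

end NullIdeal

section Cylinders

lemma mem_cyl_ofFn {n : ℕ} {v : Fin n → Bool} {x : ℕ → Bool} :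
    x ∈ cyl (List.ofFn v) ↔ ∀ i : Fin n, x i = v i := by
  simp only [cyl, List.get_ofFn]
  exact ⟨fun h i => h (i.cast (List.length_ofFn).symm), fun h i => h (i.cast List.length_ofFn)⟩

lemma cyl_ofFn_eq_cylinder (x : ℕ → Bool) (n : ℕ) :
    cyl (List.ofFn fun i : Fin n => x i) = cylinder x n := by
  ext y
  simp only [mem_cyl_ofFn, mem_cylinder_iff]
  exact ⟨fun h i hi => h ⟨i, hi⟩, fun h i => h i i.2⟩

lemma isOpen_cyl_s7 (s : List Bool) : IsOpen (cyl s) := by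
  have : cyl s = ⋂ i : Fin s.length, (fun x : ℕ → Bool => x i) ⁻¹' {s.get i} := by
    ext; simp [cyl]
  rw [this]
  exact isOpen_iInter_of_finite fun i => (isOpen_discrete _).preimage (continuous_apply _)

lemma measurableSet_cylF (c : Finset (List Bool)) : MeasurableSet (cylF c) :=
  .biUnion c.countable_toSet fun s _ => (isOpen_cyl_s7 s).measurableSet

lemma NSet_eq_limsup (c : ℕ → Finset (List Bool)) :
    NSet c = limsup (fun n => cylF (c n)) atTop := by
  ext x
  simp [NSet, limsup_eq_iInf_iSup_of_nat]

lemma measurableSet_NSet (c : ℕ → Finset (List Bool)) : MeasurableSet (NSet c) :=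
  NSet_eq_limsup c ▸ MeasurableSet.measurableSet_limsup fun n => measurableSet_cylF (c n)

lemma measure_NSet_eq_zero {μ : Measure (ℕ → Bool)} {c : ℕ → Finset (List Bool)}
    (h : ∑' n, μ (cylF (c n)) ≠ ∞) : μ (NSet c) = 0 :=
  NSet_eq_limsup c ▸ measure_limsup_atTop_eq_zero h

lemma exists_cylinder_subset_of_isOpen {U : Set (ℕ → Bool)} (hU : IsOpen U) {x : ℕ → Bool}
    (hx : x ∈ U) : ∃ n, cylinder x n ⊆ U := by
  obtain ⟨_, ⟨z, n, rfl⟩, hxz, hzU⟩ :=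
    (isTopologicalBasis_cylinders fun _ => Bool).exists_subset_of_mem_open hx hU
  exact ⟨n, mem_cylinder_iff_eq.1 hxz ▸ hzU⟩

open Classical in
noncomputable def cylsInside (n : ℕ) (S : Set (ℕ → Bool)) : Finset (List Bool) :=
  (Finset.univ.filter fun v : Fin n → Bool => cyl (List.ofFn v) ⊆ S).image List.ofFn

lemma mem_cylF_cylsInside {n : ℕ} {S : Set (ℕ → Bool)} {x : ℕ → Bool} :
    x ∈ cylF (cylsInside n S) ↔ cylinder x n ⊆ S := by
  simp only [cylF, cylsInside, Finset.mem_image, Finset.mem_filter, Finset.mem_univ, true_and,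
    mem_iUnion, exists_prop]
  constructor
  · rintro ⟨_, ⟨v, hv, rfl⟩, hx⟩
    have : v = fun i : Fin n => x i := funext fun i => (mem_cyl_ofFn.1 hx i).symm
    subst this
    rwa [← cyl_ofFn_eq_cylinder]
  · intro h
    exact ⟨_, ⟨_, (cyl_ofFn_eq_cylinder x n).symm ▸ h, rfl⟩, mem_cyl_ofFn.2 fun _ => rfl⟩

end Cylinders

section Covering

variable {μ : Measure (ℕ → Bool)} [IsFiniteMeasure μ]

lemma tendsto_measure_diff_cylF_cylsInside {U : Set (ℕ → Bool)} (hU : IsOpen U) :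
    Tendsto (fun n => μ (U \ cylF (cylsInside n U))) atTop (𝓝 0) := by
  have hanti : Antitone fun n => U \ cylF (cylsInside n U) := fun m n hmn x hx =>
    ⟨hx.1, fun hxn => hx.2 (mem_cylF_cylsInside.2
      ((cylinder_anti x hmn).trans (mem_cylF_cylsInside.1 hxn)))⟩
  have hempty : ⋂ n, U \ cylF (cylsInside n U) = ∅ := by
    refine eq_empty_of_forall_notMem fun x hx => ?_
    obtain ⟨n, hn⟩ := exists_cylinder_subset_of_isOpen hU (mem_iInter.1 hx 0).1
    exact (mem_iInter.1 hx n).2 (mem_cylF_cylsInside.2 hn)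
  have := tendsto_measure_iInter_atTop
    (fun n => (hU.measurableSet.diff (measurableSet_cylF _)).nullMeasurableSet) hanti
    ⟨0, measure_ne_top μ _⟩
  rwa [hempty, measure_empty] at this

lemma exists_cylF_cover_of_measure_zero {B : Set (ℕ → Bool)} (hB : μ B = 0) {δ : ℕ → ℝ≥0∞}
    (hδ : ∀ k, 0 < δ k) :
    ∃ d : ℕ → Finset (List Bool), (∀ k, μ (cylF (d k)) < δ k) ∧ B ⊆ ⋃ k, cylF (d k) := by
  classical
  obtain ⟨U, hBU, hU, hUδ⟩ := Set.exists_isOpen_lt_of_lt B (δ 0) (hB ▸ hδ 0)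
  obtain ⟨L, hL, hLδ⟩ := extraction_forall_of_eventually fun k =>
    (tendsto_measure_diff_cylF_cylsInside (μ := μ) hU).eventually (gt_mem_nhds (hδ (k + 1)))
  set W : ℕ → Set (ℕ → Bool) := fun k => U \ ⋃ j < k, cylF (cylsInside (L j) U)
  refine ⟨fun k => cylsInside (L k) (W k), fun k => ?_, fun x hx => ?_⟩
  · refine (measure_mono fun x hx => mem_cylF_cylsInside.1 hx (self_mem_cylinder x _)).trans_lt ?_
    cases k with
    | zero => exact (measure_mono sdiff_subset).trans_lt hUδ
    | succ k =>
      refine (measure_mono (sdiff_subset_sdiff_right ?_)).trans_lt (hLδ k)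
      exact subset_iUnion₂ (s := fun j (_ : j < k + 1) => cylF (cylsInside (L j) U)) k
        (lt_add_one k)
  · have hex : ∃ k, cylinder x (L k) ⊆ U := by
      obtain ⟨n, hn⟩ := exists_cylinder_subset_of_isOpen hU (hBU hx)
      exact ⟨n, (cylinder_anti x (hL.id_le n)).trans hn⟩
    refine mem_iUnion.2 ⟨Nat.find hex, mem_cylF_cylsInside.2 fun y hy => ⟨Nat.find_spec hex hy, ?_⟩⟩
    simp only [mem_iUnion, not_exists]
    intro j hj hyj
    have hxy : cylinder y (L j) = cylinder x (L j) :=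
      mem_cylinder_iff_eq.1 (cylinder_anti x (hL.monotone hj.le) hy)
    exact Nat.find_min hex hj (hxy ▸ mem_cylF_cylsInside.1 hyj)

lemma exists_NSet_superset_of_measure_zero {B : Set (ℕ → Bool)} (hB : μ B = 0)
    {δ : ℕ → ℝ≥0∞} (hδ : ∀ n, 0 < δ n) :
    ∃ c : ℕ → Finset (List Bool), (∀ n, μ (cylF (c n)) < δ n) ∧ B ⊆ NSet c := by
  choose d hdδ hBd using fun m =>
    exists_cylF_cover_of_measure_zero hB (δ := fun k => δ (Nat.pair m k)) fun k => hδ _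
  refine ⟨fun n => d n.unpair.1 n.unpair.2, fun n => by simpa using hdδ n.unpair.1 n.unpair.2,
    fun x hx m => ?_⟩
  obtain ⟨k, hk⟩ := mem_iUnion.1 (hBd m hx)
  exact ⟨Nat.pair m k, Nat.left_le_pair m k, by simpa using hk⟩

end Covering

section Codes

variable {μ : Measure (ℕ → Bool)} {ε : ℕ → ℝ}

lemma NSet_mem_nullIdealOf (hε : ∀ n, 0 ≤ ε n) (hsum : Summable ε) (c : OmT μ ε) :
    NSet c.1 ∈ nullIdealOf μ := by
  refine ⟨NSet c.1, measurableSet_NSet c.1, subset_rfl, measure_NSet_eq_zero ?_⟩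
  refine ne_top_of_le_ne_top ?_ (ENNReal.tsum_le_tsum fun n => (c.2 n).le)
  rw [← ENNReal.ofReal_tsum_of_nonneg hε hsum]
  exact ENNReal.ofReal_ne_top

lemma exists_OmT_subset_NSet [IsFiniteMeasure μ] (hpos : ∀ n, 0 < ε n) (A : nullIdealOf μ) :
    ∃ c : OmT μ ε, A.1 ⊆ NSet c.1 := by
  obtain ⟨B, -, hAB, hB⟩ := A.2
  obtain ⟨c, hcε, hBc⟩ :=
    exists_NSet_superset_of_measure_zero hB fun n => ENNReal.ofReal_pos.2 (hpos n)
  exact ⟨⟨c, hcε⟩, hAB.trans hBc⟩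

end Codes

/-- With `μ = Lb₂` (characterized by `μ [s] = 2^{-|s|}`) and positive
summable `ε̄`: `Cn ≅_T C_{N(2^ω)}^⊥`, and in particular `𝔟(Cn) = cov(N(2^ω))` and
`𝔡(Cn) = non(N(2^ω))`. -/
theorem stmt7 (ε : ℕ → ℝ) (hpos : ∀ n, 0 < ε n) (hsum : Summable ε)
    (μ : MeasureTheory.Measure (ℕ → Bool))
    (hμ : ∀ s : List Bool, μ (cyl s) = (1 / 2 : ENNReal) ^ s.length) :
    TukeyLE (CnRel μ ε) (CNperp μ) ∧ TukeyLE (CNperp μ) (CnRel μ ε) ∧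
    bNum (CnRel μ ε) = covIdeal (nullIdealOf μ) ∧
    dNum (CnRel μ ε) = nonIdeal (nullIdealOf μ) := by
  have : IsProbabilityMeasure μ := ⟨by simpa [cyl] using hμ []⟩
  choose code hcode using exists_OmT_subset_NSet (μ := μ) hpos
  have h₁ : TukeyLE (CnRel μ ε) (CNperp μ) :=
    ⟨fun c => ⟨NSet c.1, NSet_mem_nullIdealOf (fun n => (hpos n).le) hsum c⟩, id,
      fun _ _ h => h⟩
  have h₂ : TukeyLE (CNperp μ) (CnRel μ ε) := ⟨code, id, fun A _ h hy => h (hcode A hy)⟩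
  exact ⟨h₁, h₂, (bNum_eq_of_tukeyLE h₁ h₂).trans bNum_CNperp,
    (dNum_eq_of_tukeyLE h₁ h₂).trans dNum_CNperp⟩
end

section
/- Let θ ≤ λ be infinite cardinals. Then C_{[λ]^{<θ}} ≅_T [λ]^{<θ} (where [λ]^{<θ} is viewed as the relational system ⟨[λ]^{<θ}, [λ]^{<θ}, ⊆⟩) if and only if θ is regular and cof([λ]^{<θ}) = λ, where cof([λ]^{<θ}) is the least cardinality of a family D ⊆ [λ]^{<θ} such that every member of [λ]^{<θ} is contained in some member of D. -/
open Cardinal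

universe u v

/-- `cof([I]^{<θ})`: the least cardinality of a family `D` of subsets of `I` of
cardinality `< θ` such that every subset of `I` of cardinality `< θ` is contained in
a member of `D`. -/
noncomputable def cofSmall (I : Type u) (θ : Cardinal.{u}) : Cardinal.{u} :=
  sInf { c | ∃ D : Set (Set I), (∀ A ∈ D, #A < θ) ∧
    (∀ A : Set I, #A < θ → ∃ B ∈ D, A ⊆ B) ∧ c = #D }

/-- Let `θ ≤ λ = |I|` be infinite cardinals. Then
`C_{[λ]^{<θ}} ≅_T ⟨[λ]^{<θ}, [λ]^{<θ}, ⊆⟩` iff `θ` is regular and `cof([λ]^{<θ}) = λ`. -/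
theorem stmt11 {I : Type u} (θ : Cardinal.{u}) (hθ : ℵ₀ ≤ θ) (hI : θ ≤ #I) :
    (TukeyLE (fun (i : I) (A : { A : Set I // #A < θ }) => i ∈ A.1)
        (fun (A B : { A : Set I // #A < θ }) => A.1 ⊆ B.1) ∧
      TukeyLE (fun (A B : { A : Set I // #A < θ }) => A.1 ⊆ B.1)
        (fun (i : I) (A : { A : Set I // #A < θ }) => i ∈ A.1)) ↔
    (θ.IsRegular ∧ cofSmall I θ = #I) := by
  have hsing : ∀ i : I, #({i} : Set I) < θ := fun i => by
    rw [Cardinal.mk_singleton]; exact one_lt_aleph0.trans_le hθ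
  have hne : { c | ∃ D : Set (Set I), (∀ A ∈ D, #A < θ) ∧
      (∀ A : Set I, #A < θ → ∃ B ∈ D, A ⊆ B) ∧ c = #D }.Nonempty :=
    ⟨_, {A : Set I | #A < θ}, fun A hA => hA, fun A hA => ⟨A, hA, subset_rfl⟩, rfl⟩
  constructor
  · rintro ⟨-, F, G, hFG⟩
    have hreg : θ.IsRegular := by
      by_contra hnr
      have hcof : θ.ord.cof < θ :=
        lt_of_le_of_ne (Ordinal.cof_ord_le θ) (fun h => hnr ⟨hθ, h.ge⟩)
      obtain ⟨ι, f, hlsub, hι⟩ := Ordinal.exists_lsub_cof θ.ord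
      have hfi : ∀ i, (f i).card < θ := fun i =>
        Cardinal.lt_ord.1 (hlsub ▸ Ordinal.lt_lsub f i)
      choose A hA using fun i => Cardinal.le_mk_iff_exists_set.1 ((hfi i).le.trans hI)
      have hAθ : ∀ i, #(A i) < θ := fun i => (hA i).trans_lt (hfi i)
      have hB0 : #(Set.range (fun i => F ⟨A i, hAθ i⟩)) < θ :=
        Cardinal.mk_range_le.trans_lt (hι ▸ hcof)
      set G0 := G ⟨_, hB0⟩ with hG0
      have hle : ∀ i, (f i).card ≤ #G0.1 := fun i => by
        rw [← hA i]
        exact Cardinal.mk_le_mk_of_subset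
          (hFG ⟨A i, hAθ i⟩ ⟨_, hB0⟩ ⟨i, rfl⟩)
      have hall : ∀ c < θ, c ≤ #G0.1 := by
        intro c hc
        have hco : c.ord < Ordinal.lsub f := hlsub ▸ Cardinal.ord_lt_ord.2 hc
        obtain ⟨i, hi⟩ := Ordinal.lt_lsub_iff.1 hco
        calc c = c.ord.card := (Cardinal.card_ord c).symm
          _ ≤ (f i).card := Ordinal.card_le_card hi
          _ ≤ #G0.1 := hle i
      have h1 : θ ≤ Order.succ (#G0.1) := by
        by_contra h
        push_neg at h
        exact absurd (hall _ h) (by simp)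
      have h2 : θ = Order.succ (#G0.1) := le_antisymm h1 (Order.succ_le_of_lt G0.2)
      rcases le_or_gt ℵ₀ (#G0.1) with h | h
      · exact hnr (h2 ▸ Cardinal.isRegular_succ h)
      · have : θ ≤ ℵ₀ := h2 ▸ Order.succ_le_of_lt h
        exact hnr ((le_antisymm this hθ) ▸ Cardinal.isRegular_aleph0)
    refine ⟨hreg, le_antisymm ?_ ?_⟩
    · -- cofSmall ≤ #I
      have hd : cofSmall I θ ≤ #↥(Set.range (fun i : I => (G ⟨{i}, hsing i⟩).1)) := by
        refine csInf_le' ⟨Set.range (fun i : I => (G ⟨{i}, hsing i⟩).1), ?_, ?_, rfl⟩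
        · rintro _ ⟨i, rfl⟩; exact (G ⟨{i}, hsing i⟩).2
        · intro A hA
          exact ⟨_, ⟨F ⟨A, hA⟩, rfl⟩, hFG ⟨A, hA⟩ ⟨{F ⟨A, hA⟩}, hsing _⟩ rfl⟩
      exact hd.trans Cardinal.mk_range_le
    · -- #I ≤ cofSmall
      refine le_csInf hne ?_
      rintro c ⟨D, hmem, hdom, rfl⟩
      by_contra hlt
      push_neg at hlt
      have hcover : ∀ i : I, i ∈ ⋃ (A : ↥D), (A : Set I) := fun i => by
        obtain ⟨B, hB, hsub⟩ := hdom {i} (hsing i)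
        exact Set.mem_iUnion.2 ⟨⟨B, hB⟩, hsub rfl⟩
      have hIle : #I ≤ #↥D * ⨆ (A : ↥D), #(A : Set I) := by
        calc #I = #(Set.univ : Set I) := Cardinal.mk_univ.symm
          _ ≤ #(⋃ (A : ↥D), (A : Set I)) :=
            Cardinal.mk_le_mk_of_subset (fun i _ => hcover i)
          _ ≤ #↥D * ⨆ (A : ↥D), #(A : Set I) := Cardinal.mk_iUnion_le _
      rcases lt_or_ge (#↥D) θ with h | h
      · have hs : (⨆ (A : ↥D), #(A : Set I)) < θ :=
          Cardinal.iSup_lt_of_isRegular hreg h (fun A => hmem A A.2)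
        exact absurd hI (not_le.2 (lt_of_le_of_lt hIle (Cardinal.mul_lt_of_lt hθ h hs)))
      · have hs : (⨆ (A : ↥D), #(A : Set I)) ≤ θ :=
          ciSup_le' (fun A => (hmem A A.2).le)
        have : #I ≤ #↥D := by
          refine hIle.trans ?_
          calc #↥D * ⨆ (A : ↥D), #(A : Set I) ≤ #↥D * θ := mul_le_mul_right hs _
            _ = #↥D := Cardinal.mul_eq_left (hθ.trans h) h
              (fun h0 => by simp [h0] at hθ; exact (aleph0_ne_zero hθ))
        exact absurd this (not_le.2 hlt)
  · rintro ⟨hreg, hcof⟩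
    constructor
    · exact ⟨fun i => ⟨{i}, hsing i⟩, id, fun i B h => h rfl⟩
    · obtain ⟨D, hmem, hdom, hcard⟩ := csInf_mem hne
      have heq : #I = #↥D := hcof ▸ hcard
      obtain ⟨e⟩ := Cardinal.eq.1 heq
      choose pick hpickD hpick using fun (A : { A : Set I // #A < θ }) => hdom A.1 A.2
      have hgcard : ∀ B : { A : Set I // #A < θ },
          #(⋃ i ∈ B.1, ((e i : Set I))) < θ := by
        intro B
        rw [Set.biUnion_eq_iUnion]
        have hB : #↥B.1 < θ := B.2
        refine lt_of_le_of_lt (Cardinal.mk_iUnion_le _) ?_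
        exact Cardinal.mul_lt_of_lt hθ hB
          (Cardinal.iSup_lt_of_isRegular hreg hB (fun i => hmem _ (e i.1).2))
      refine ⟨fun A => e.symm ⟨pick A, hpickD A⟩,
        fun B => ⟨_, hgcard B⟩, ?_⟩
      intro A B h
      intro x hx
      refine Set.mem_biUnion h ?_
      rw [Equiv.apply_symm_apply]
      exact hpick A hx
end

section
/- Let ν ≤ κ be infinite cardinals and L a set with κ ≤ |L| ≤ 2^κ. Then there exists a set H of functions from L to κ with |H| ≤ κ^{<ν} such that every partial function from L to κ whose domain has cardinality < ν is extended by some member of H. -/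
/-!
Embed `L` into `Set K` by `j`. Given a partial function `f` on a set `D` with `|D| < ν`, fewer
than `ν` points of `K` separate the sets coding the points of `D`; on a set `A` of such points the
traces `j x ∩ A` of the points `x ∈ D` are distinct, and `f` factors through them. So `f` is
extended by a function determined by `A`, a family of fewer than `ν` subsets of `A` containing
those traces, and a value for each member of the family. There are at most `κ^{<ν}` such data,
since `(2^μ)^μ ≤ κ^{μ·μ}` for `μ < ν`.
-/

open Cardinal Function Set

universe u

namespace EngelkingKarlowicz

theorem exists_range_subset_range_of_mk_le {α β γ : Type u} [Nonempty β] (c : γ → β)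
    (h : #γ ≤ #α) : ∃ σ : α → β, range c ⊆ range σ := by
  obtain ⟨emb⟩ := (le_def γ α).1 h
  refine ⟨extend emb c fun _ => Classical.arbitrary β, ?_⟩
  rintro _ ⟨g, rfl⟩
  exact ⟨emb g, emb.injective.extend_apply _ _ g⟩

theorem exists_injective_preimage {ι α β : Type u} [Nonempty β] {s : ι → Set β}
    (hs : Injective s) (h : #(ι × ι) ≤ #α) : ∃ σ : α → β, Injective fun i => σ ⁻¹' s i := by
  have separate : ∀ p : {p : ι × ι // p.1 ≠ p.2}, ∃ b, ¬(b ∈ s p.1.1 ↔ b ∈ s p.1.2) := by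
    intro p
    by_contra! hp
    exact p.2 (hs (Set.ext hp))
  choose c hc using separate
  obtain ⟨σ, hσ⟩ := exists_range_subset_range_of_mk_le c ((mk_subtype_le _).trans h)
  refine ⟨σ, fun i i' hii' => by_contra fun hne => ?_⟩
  obtain ⟨a, ha⟩ := hσ ⟨⟨(i, i'), hne⟩, rfl⟩
  exact hc ⟨(i, i'), hne⟩ (ha ▸ Set.ext_iff.1 hii' a)

theorem exists_extend_preimage_eq {α K L : Type u} [Nonempty K] {j : L → Set K}
    (hj : Injective j) {D : Set L} (hDD : #(D × D) ≤ #α) (hD : #D ≤ #α) (f : D → K) :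
    ∃ (σ : α → K) (w : α → Set α) (e : α → K),
      ∀ (e' : Set α → K) (x : D), extend w e e' (σ ⁻¹' j x) = f x := by
  obtain ⟨σ, htrace⟩ := exists_injective_preimage (hj.comp Subtype.val_injective) hDD
  obtain ⟨w, hw⟩ := exists_range_subset_range_of_mk_le (fun x : D => σ ⁻¹' j x) hD
  set g := extend (fun x : D => σ ⁻¹' j x) f fun _ => Classical.arbitrary K
  refine ⟨σ, w, g ∘ w, fun e' x => ?_⟩
  obtain ⟨a, ha⟩ : ∃ a, w a = σ ⁻¹' j x := hw ⟨x, rfl⟩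
  have hfactor : (g ∘ w).FactorsThrough w := fun _ _ h => congrArg g h
  rw [← ha, hfactor.extend_apply, comp_apply, ha]
  exact htrace.extend_apply _ _ x

/-- The sets `Iio t`, `t : ν.ord.ToType`, realize every cardinality below `ν`; an index
`⟨t, σ, w, e⟩` codes the set `A = range σ`, the family `w` of traces on it and the values `e`. -/
def Index (ν : Cardinal.{u}) (K : Type u) : Type u :=
  Σ t : ν.ord.ToType, (Iio t → K) × (Iio t → Set (Iio t)) × (Iio t → K)

noncomputable def extender {ν : Cardinal.{u}} {K L : Type u} (j : L → Set K) (k₀ : K)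
    (i : Index ν K) (x : L) : K :=
  extend i.2.2.1 i.2.2.2 (fun _ => k₀) (i.2.1 ⁻¹' j x)

theorem exists_mk_Iio_eq {ν μ : Cardinal.{u}} (h : μ < ν) :
    ∃ t : ν.ord.ToType, #(Iio t) = μ := by
  have hlt := (ord_lt_ord.2 h).trans_eq (Ordinal.type_toType _).symm
  refine ⟨Ordinal.enum (· < ·) ⟨μ.ord, hlt⟩, ?_⟩
  have := Ordinal.card_typein (r := ((· < ·) : ν.ord.ToType → ν.ord.ToType → Prop))
    (Ordinal.enum (· < ·) ⟨μ.ord, hlt⟩)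
  rw [Ordinal.typein_enum, card_ord] at this
  exact this.symm

theorem mk_index_le {ν : Cardinal.{u}} {K : Type u} (hν : ℵ₀ ≤ ν) (hνK : ν ≤ #K) :
    #(Index ν K) ≤ #K ^< ν := by
  have hK : #K ≤ #K ^< ν := by simpa using le_powerlt #K (one_lt_aleph0.trans_le hν)
  have hinf : ℵ₀ ≤ #K ^< ν := hν.trans (hνK.trans hK)
  have hfiber (t : ν.ord.ToType) :
      #((Iio t → K) × (Iio t → Set (Iio t)) × (Iio t → K)) ≤ #K ^< ν := by
    have hμ : #(Iio t) < ν := by simpa using mk_Iio_lt t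
    have hvalues : #(Iio t → K) ≤ #K ^< ν := by
      rw [← power_def]
      exact le_powerlt _ hμ
    have htraces : #(Iio t → Set (Iio t)) ≤ #K ^< ν := calc
      _ = 2 ^ (#(Iio t) * #(Iio t)) := by rw [← power_def, mk_set, ← power_mul]
      _ ≤ #K ^ (#(Iio t) * #(Iio t)) :=
        power_le_power_right ((natCast_lt_aleph0 (n := 2)).le.trans (hν.trans hνK))
      _ ≤ #K ^< ν := le_powerlt _ (mul_lt_of_lt hν hμ hμ)
    calc _ = #(Iio t → K) * (#(Iio t → Set (Iio t)) * #(Iio t → K)) := by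
          simp only [mk_prod, lift_id]
      _ ≤ #K ^< ν * (#K ^< ν * #K ^< ν) := by gcongr
      _ = #K ^< ν := by rw [mul_eq_self hinf, mul_eq_self hinf]
  calc #(Index ν K) ≤ sum fun _ : ν.ord.ToType => #K ^< ν :=
        (mk_sigma _).trans_le (sum_le_sum _ _ hfiber)
    _ = ν * #K ^< ν := by simp
    _ ≤ #K ^< ν * #K ^< ν := by gcongr; exact hνK.trans hK
    _ = #K ^< ν := mul_eq_self hinf

theorem exists_extender_eq {ν : Cardinal.{u}} (hν : ℵ₀ ≤ ν) {K L : Type u} {j : L → Set K}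
    (hj : Injective j) (k₀ : K) {D : Set L} (hD : #D < ν) (f : D → K) :
    ∃ i : Index ν K, ∀ x : D, extender j k₀ i x = f x := by
  have hDD : #(D × D) < ν := by simpa using mul_lt_of_lt hν hD hD
  obtain ⟨t, ht⟩ := exists_mk_Iio_eq (max_lt hDD hD)
  have : Nonempty K := ⟨k₀⟩
  obtain ⟨σ, w, e, he⟩ :=
    exists_extend_preimage_eq hj (ht ▸ le_max_left _ _) (ht ▸ le_max_right _ _) f
  exact ⟨⟨t, σ, w, e⟩, he _⟩

end EngelkingKarlowicz

open EngelkingKarlowicz in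
theorem stmt13_general {K L : Type u} (ν : Cardinal.{u}) (hν : ℵ₀ ≤ ν) (hνκ : ν ≤ #K)
    (hL : #L ≤ 2 ^ #K) :
    ∃ H : Set (L → K), #H ≤ (#K) ^< ν ∧
      ∀ (D : Set L) (f : D → K), #D < ν → ∃ h ∈ H, ∀ x : D, h x = f x := by
  obtain ⟨k₀⟩ : Nonempty K := mk_ne_zero_iff.1 (aleph0_pos.trans_le (hν.trans hνκ)).ne'
  obtain ⟨j⟩ : Nonempty (L ↪ Set K) := by rwa [← le_def, mk_set]
  refine ⟨range (extender (ν := ν) j k₀), mk_range_le.trans (mk_index_le hν hνκ),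
    fun D f hD => ?_⟩
  obtain ⟨i, hi⟩ := exists_extender_eq hν j.injective k₀ hD f
  exact ⟨_, mem_range_self i, hi⟩

/-- Engelking–Karłowicz. Let `ν ≤ κ = |K|` be infinite cardinals and
`L` a set with `κ ≤ |L| ≤ 2^κ`. Then there is a set `H` of functions from `L` to `K`
with `|H| ≤ κ^{<ν}` such that every partial function from `L` to `K` whose domain has
cardinality `< ν` is extended by some member of `H`. -/
theorem stmt13 {K L : Type u} (ν : Cardinal.{u}) (hν : ℵ₀ ≤ ν) (hνκ : ν ≤ #K)
    (hκL : #K ≤ #L) (hL : #L ≤ 2 ^ #K) :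
    ∃ H : Set (L → K), #H ≤ (#K) ^< ν ∧
      ∀ (D : Set L) (f : D → K), #D < ν → ∃ h ∈ H, ∀ x : D, h x = f x :=
  stmt13_general ν hν hνκ hL
end

section
/- (Kelley's theorem) Let 𝔹 be a Boolean algebra. Then 𝔹 ∖ {0} is the union of countably many subsets, each with positive intersection number, if and only if there exists a strictly positive finitely additive measure Ξ : 𝔹 → [0,1], i.e., Ξ(1) = 1, Ξ(a ∨ b) = Ξ(a) + Ξ(b) whenever a ∧ b = 0, and Ξ(b) = 0 iff b = 0. -/
universe u

/-- `ι*(s)`: the largest cardinality of a set `e ⊆ n` such that `{s_i : i ∈ e}` has a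
nonzero lower bound (equivalently, `inf_{i ∈ e} s_i ≠ ⊥`). -/
noncomputable def iotaStar {B : Type u} [BooleanAlgebra B] {n : ℕ} (s : Fin n → B) : ℕ :=
  sSup { k | ∃ e : Finset (Fin n), e.card = k ∧ e.inf s ≠ ⊥ }

/-- `Q` has positive intersection number:
`int(Q) = inf { ι*(s)/n : s ∈ Q^n, 0 < n < ω } > 0`. -/
def PosIntersectionNumber {B : Type u} [BooleanAlgebra B] (Q : Set B) : Prop :=
  ∃ δ : ℝ, 0 < δ ∧ ∀ n : ℕ, 0 < n → ∀ s : Fin n → B, (∀ i, s i ∈ Q) →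
    δ ≤ (iotaStar s : ℝ) / (n : ℝ)

/-!
If `Ξ` is a strictly positive finitely additive probability, the sets `{b | 1/(n+1) ≤ Ξ b}`
cover `𝔹 ∖ {0}`, and each has intersection number at least `1/(n+1)`: decomposing along the
atoms of the subalgebra generated by `s₀, …, s_{n-1}`, the sum `∑ Ξ(sᵢ)` is a `Ξ`-weighted
average of the numbers of `sᵢ` above an atom, and each of these is at most `ι*(s)`.

Conversely, let `Q` have intersection number at least `δ` and let `t ⊆ 𝔹` be finite. A
sequence from `Q ∩ t` is a vector of integer weights on `Q ∩ t`, so every probability vector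
on `Q ∩ t` (approximated by integer vectors) puts mass `≥ δ` above some atom generated by `t`.
By the minimax theorem some probability on these atoms puts mass `≥ δ` below every element of
`Q ∩ t`; it is a finitely additive probability on `t`. A limit point of these in `[0,1]^𝔹` is
a finitely additive probability that is `≥ δ` on `Q`, and `∑ 2⁻ⁿ⁻¹ μₙ` over the countably many
`Qₙ` is strictly positive.
-/

namespace Kelley

section Cells

variable {B : Type*} [BooleanAlgebra B] {ι : Type*} [Fintype ι] (s : ι → B)

/-- The nonzero cells are the atoms of the subalgebra generated by `s`. -/
def cell (g : ι → Bool) : B :=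
  Finset.univ.inf fun i => bif g i then s i else (s i)ᶜ

variable {s}

lemma cell_le_cond (g : ι → Bool) (i : ι) : cell s g ≤ bif g i then s i else (s i)ᶜ :=
  Finset.inf_le (Finset.mem_univ i)

lemma cell_le {g : ι → Bool} {i : ι} (hi : g i = true) : cell s g ≤ s i := by
  simpa [hi] using cell_le_cond g i

lemma cell_le_compl {g : ι → Bool} {i : ι} (hi : g i = false) : cell s g ≤ (s i)ᶜ := by
  simpa [hi] using cell_le_cond g i

lemma cell_le_or_le_compl (g : ι → Bool) (i : ι) : cell s g ≤ s i ∨ cell s g ≤ (s i)ᶜ := by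
  cases hi : g i
  · exact .inr (cell_le_compl hi)
  · exact .inl (cell_le hi)

lemma inf_cell_of_false {g : ι → Bool} {i : ι} (hi : g i = false) : s i ⊓ cell s g = ⊥ :=
  (disjoint_compl_right.mono_right (cell_le_compl hi)).eq_bot

lemma disjoint_cell {g g' : ι → Bool} (h : g ≠ g') : Disjoint (cell s g) (cell s g') := by
  obtain ⟨i, hi⟩ := Function.ne_iff.1 h
  cases hg : g i <;> cases hg' : g' i <;> simp_all
  · exact (disjoint_compl_left.mono_left (cell_le_compl hg)).mono_right (cell_le hg')
  · exact (disjoint_compl_right.mono_left (cell_le hg)).mono_right (cell_le_compl hg')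

lemma sup_cell [DecidableEq ι] : Finset.univ.sup (cell s) = ⊤ := by
  refine eq_top_iff.2 ?_
  calc (⊤ : B) = Finset.univ.inf fun i =>
        Finset.univ.sup fun b : Bool => bif b then s i else (s i)ᶜ := by simp
    _ = _ := Finset.inf_sup _ _ _
    _ ≤ Finset.univ.sup (cell s) := Finset.sup_le fun g _ =>
        le_of_eq_of_le
          (Finset.inf_attach _ fun i => bif g i (Finset.mem_univ i) then s i else (s i)ᶜ)
          (Finset.le_sup (f := cell s) (Finset.mem_univ fun i => g i (Finset.mem_univ i)))

lemma exists_cell_inf_ne_bot {b : B} (hb : b ≠ ⊥) : ∃ g, cell s g ⊓ b ≠ ⊥ := by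
  classical
  by_contra! h
  apply hb
  rw [← inf_top_eq b, ← sup_cell (s := s), Finset.sup_inf_distrib_left]
  simpa [inf_comm] using h

end Cells

section IotaStar

variable {B : Type*} [BooleanAlgebra B] {n : ℕ}

lemma card_le_iotaStar {s : Fin n → B} {e : Finset (Fin n)} (he : e.inf s ≠ ⊥) :
    e.card ≤ iotaStar s :=
  le_csSup ⟨n, by rintro _ ⟨e', rfl, -⟩; simpa using e'.card_le_univ⟩ ⟨e, rfl, he⟩

lemma exists_card_eq_iotaStar [Nontrivial B] (s : Fin n → B) :
    ∃ e : Finset (Fin n), e.card = iotaStar s ∧ e.inf s ≠ ⊥ :=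
  Nat.sSup_mem (s := {k | ∃ e : Finset (Fin n), e.card = k ∧ e.inf s ≠ ⊥}) ⟨0, ∅, rfl, by simp⟩
    ⟨n, by rintro _ ⟨e', rfl, -⟩; simpa using e'.card_le_univ⟩

lemma exists_inf_ne_bot_le_card [Nontrivial B] {Q : Set B} {δ : ℝ}
    (hQ : ∀ n : ℕ, 0 < n → ∀ s : Fin n → B, (∀ i, s i ∈ Q) → δ ≤ (iotaStar s : ℝ) / (n : ℝ))
    {κ : Type*} [Fintype κ] (p : κ → B) (hp : ∀ k, p k ∈ Q) :
    ∃ e : Finset κ, e.inf p ≠ ⊥ ∧ δ * Fintype.card κ ≤ e.card := by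
  rcases (Fintype.card κ).eq_zero_or_pos with h0 | hpos
  · exact ⟨∅, by simp, by simp [h0]⟩
  set σ := Fintype.equivFin κ
  obtain ⟨e, hcard, he⟩ := exists_card_eq_iotaStar (p ∘ σ.symm)
  refine ⟨e.map σ.symm.toEmbedding, by rwa [Finset.inf_map], ?_⟩
  have hδ := hQ _ hpos (p ∘ σ.symm) fun i => hp _
  rw [le_div_iff₀ (by exact_mod_cast hpos)] at hδ
  simpa [hcard, mul_comm] using hδ

end IotaStar

section Measures

variable {B : Type*} [BooleanAlgebra B]

structure IsFinAddProbOn (S : Set B) (μ : B → ℝ) : Prop where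
  mem_Icc : ∀ b, μ b ∈ Set.Icc (0 : ℝ) 1
  map_top : μ ⊤ = 1
  map_sup : ∀ a ∈ S, ∀ b ∈ S, a ⊓ b = ⊥ → μ (a ⊔ b) = μ a + μ b

abbrev IsFinAddProb (μ : B → ℝ) : Prop := IsFinAddProbOn Set.univ μ

namespace IsFinAddProb

variable {μ : B → ℝ} (hμ : IsFinAddProb μ)
include hμ

lemma map_sup_of_inf_eq_bot {a b : B} (hab : a ⊓ b = ⊥) : μ (a ⊔ b) = μ a + μ b :=
  hμ.map_sup a trivial b trivial hab

lemma map_bot : μ ⊥ = 0 := by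
  simpa using hμ.map_sup_of_inf_eq_bot (inf_idem (⊥ : B))

lemma map_finset_sup {α : Type*} {u : Finset α} {f : α → B}
    (hf : (u : Set α).PairwiseDisjoint f) : μ (u.sup f) = ∑ x ∈ u, μ (f x) := by
  classical
  induction u using Finset.induction_on with
  | empty => simpa using hμ.map_bot
  | insert x u hx ih =>
    rw [Finset.coe_insert, Set.pairwiseDisjoint_insert_of_notMem hx] at hf
    rw [Finset.sup_insert, Finset.sum_insert hx, ← ih hf.1]
    exact hμ.map_sup_of_inf_eq_bot (Finset.disjoint_sup_right.2 fun y hy => hf.2 y hy).eq_bot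

lemma sum_inf_cell {ι : Type*} [Fintype ι] [DecidableEq ι] (s : ι → B) (b : B) :
    ∑ g, μ (b ⊓ cell s g) = μ b := by
  conv_rhs => rw [← inf_top_eq b, ← sup_cell (s := s), Finset.sup_inf_distrib_left]
  refine (hμ.map_finset_sup fun g _ g' _ hgg' => ?_).symm
  exact (disjoint_cell hgg').mono inf_le_right inf_le_right

lemma sum_le_iotaStar {n : ℕ} (s : Fin n → B) : ∑ i, μ (s i) ≤ iotaStar s := by
  have hcell (g : Fin n → Bool) : ∑ i, μ (s i ⊓ cell s g) ≤ iotaStar s * μ (cell s g) := by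
    by_cases hg : cell s g = ⊥
    · simp [hg, hμ.map_bot]
    have hterm (i : Fin n) : μ (s i ⊓ cell s g) = if g i then μ (cell s g) else 0 := by
      cases hi : g i
      · simp [inf_cell_of_false hi, hμ.map_bot]
      · simp [inf_eq_right.2 (cell_le hi)]
    have hcard : (Finset.univ.filter fun i => g i).card ≤ iotaStar s :=
      card_le_iotaStar fun h => hg <| eq_bot_iff.2 <| h ▸
        Finset.le_inf fun i hi => cell_le (Finset.mem_filter.1 hi).2
    simp_rw [hterm, Finset.sum_ite, Finset.sum_const_zero, add_zero, Finset.sum_const,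
      nsmul_eq_mul]
    exact mul_le_mul_of_nonneg_right (by exact_mod_cast hcard) (hμ.mem_Icc _).1
  have hsum : ∑ g, μ (cell s g) = 1 := by
    simpa [hμ.map_top] using hμ.sum_inf_cell s ⊤
  calc ∑ i, μ (s i) = ∑ g, ∑ i, μ (s i ⊓ cell s g) := by
        rw [Finset.sum_comm]; simp_rw [hμ.sum_inf_cell]
    _ ≤ ∑ g, iotaStar s * μ (cell s g) := Finset.sum_le_sum fun g _ => hcell g
    _ = iotaStar s := by rw [← Finset.mul_sum, hsum, mul_one]

lemma posIntersectionNumber {c : ℝ} (hc : 0 < c) : PosIntersectionNumber {b | c ≤ μ b} := by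
  refine ⟨c, hc, fun n hn s hs => (le_div_iff₀ (by exact_mod_cast hn)).2 ?_⟩
  calc c * n = ∑ _i : Fin n, c := by simp [mul_comm]
    _ ≤ ∑ i, μ (s i) := Finset.sum_le_sum fun i _ => hs i
    _ ≤ iotaStar s := hμ.sum_le_iotaStar s

end IsFinAddProb

open Classical in
lemma isFinAddProbOn_sum_ite {S : Set B} {κ : Type*} [Fintype κ] {x : κ → B}
    (hx : ∀ k, x k ≠ ⊥) (hxS : ∀ k, ∀ a ∈ S, x k ≤ a ∨ x k ≤ aᶜ) {w : κ → ℝ}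
    (hw : w ∈ stdSimplex ℝ κ) :
    IsFinAddProbOn S fun b => ∑ k, if x k ≤ b then w k else 0 := by
  refine ⟨fun b => ⟨Finset.sum_nonneg fun k _ => ?_, ?_⟩, by simpa using hw.2, ?_⟩
  · split_ifs <;> simp [hw.1 k]
  · exact hw.2 ▸ Finset.sum_le_sum fun k _ => by split_ifs <;> simp [hw.1 k]
  · intro a ha b hb hab
    rw [← Finset.sum_add_distrib]
    refine Finset.sum_congr rfl fun k _ => ?_
    have hnot : ¬ (x k ≤ a ∧ x k ≤ b) := fun h => hx k (eq_bot_iff.2 (hab ▸ le_inf h.1 h.2))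
    have hsup : x k ≤ a ⊔ b ↔ x k ≤ a ∨ x k ≤ b := by
      refine ⟨fun h => ?_, fun h => h.elim (le_sup_of_le_left ·) (le_sup_of_le_right ·)⟩
      by_contra! hab'
      have hc : x k ≤ (a ⊔ b)ᶜ := by
        rw [compl_sup]
        exact le_inf ((hxS k a ha).resolve_left hab'.1) ((hxS k b hb).resolve_left hab'.2)
      exact hx k (eq_bot_iff.2 (inf_compl_self (a ⊔ b) ▸ le_inf h hc))
    by_cases hka : x k ≤ a <;> by_cases hkb : x k ≤ b <;> simp_all

end Measures

section Minimax

open Matrix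

variable {ι κ : Type*} [Fintype κ]

lemma exists_mem_stdSimplex_le_mulVec [Fintype ι] [Nonempty ι] (M : Matrix κ ι ℝ) {δ : ℝ}
    (h : ∀ l ∈ stdSimplex ℝ κ, ∃ z, δ ≤ (l ᵥ* M) z) :
    ∃ w ∈ stdSimplex ℝ ι, ∀ q, δ ≤ (M *ᵥ w) q := by
  classical
  obtain ⟨z₀⟩ := ‹Nonempty ι›
  rcases isEmpty_or_nonempty κ with hκ | ⟨⟨q₀⟩⟩
  · exact ⟨_, single_mem_stdSimplex ℝ z₀, isEmptyElim⟩
  have hlin (w : ι → ℝ) : IsLinearMap ℝ fun l : κ → ℝ => l ⬝ᵥ (M *ᵥ w) :=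
    ⟨fun _ _ => add_dotProduct _ _ _, fun _ _ => smul_dotProduct _ _ _⟩
  have hlin' (l : κ → ℝ) : IsLinearMap ℝ fun w : ι → ℝ => l ⬝ᵥ (M *ᵥ w) :=
    ⟨fun _ _ => by simp [mulVec_add, dotProduct_add],
      fun _ _ => by simp [mulVec_smul, dotProduct_smul]⟩
  obtain ⟨l, hl, w, hw, hsaddle⟩ := Sion.exists_isSaddlePointOn
    (f := fun l w => l ⬝ᵥ (M *ᵥ w))
    ⟨_, single_mem_stdSimplex ℝ q₀⟩ (convex_stdSimplex ℝ κ) (isCompact_stdSimplex ℝ κ)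
    (fun w _ =>
      (hlin w).mk'.continuous_of_finiteDimensional.lowerSemicontinuous.lowerSemicontinuousOn _)
    (fun w _ => ((hlin w).mk'.convexOn (convex_stdSimplex ℝ κ)).quasiconvexOn)
    (convex_stdSimplex ℝ ι) ⟨_, single_mem_stdSimplex ℝ z₀⟩ (isCompact_stdSimplex ℝ ι)
    (fun l _ =>
      (hlin' l).mk'.continuous_of_finiteDimensional.upperSemicontinuous.upperSemicontinuousOn _)
    (fun l _ => ((hlin' l).mk'.concaveOn (convex_stdSimplex ℝ ι)).quasiconcaveOn)
  refine ⟨w, hw, fun q => ?_⟩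
  obtain ⟨z, hz⟩ := h l hl
  calc δ ≤ (l ᵥ* M) z := hz
    _ = l ⬝ᵥ (M *ᵥ Pi.single z 1) := by rw [dotProduct_mulVec, dotProduct_single_one]
    _ ≤ Pi.single q 1 ⬝ᵥ (M *ᵥ w) :=
        hsaddle _ (single_mem_stdSimplex ℝ q) _ (single_mem_stdSimplex ℝ z)
    _ = (M *ᵥ w) q := single_one_dotProduct _ _

open Filter in
lemma exists_le_vecMul_of_forall_nat [Finite ι] {M : Matrix κ ι ℝ}
    (hM₀ : ∀ q z, 0 ≤ M q z) (hM₁ : ∀ q z, M q z ≤ 1) {δ : ℝ} (hδ : 0 ≤ δ)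
    (h : ∀ c : κ → ℕ, ∃ z, δ * ∑ q, (c q : ℝ) ≤ ((fun q => (c q : ℝ)) ᵥ* M) z)
    {l : κ → ℝ} (hl : l ∈ stdSimplex ℝ κ) : ∃ z, δ ≤ (l ᵥ* M) z := by
  by_contra! hlt
  -- rounding `N • l` up to integers costs at most `card κ`, which a large `N` absorbs
  obtain ⟨N, hN⟩ : ∃ N : ℕ, ∀ z, N * (l ᵥ* M) z + Fintype.card κ < N * δ := by
    refine (eventually_all.2 fun z => ?_).exists (f := atTop)
    filter_upwards [(tendsto_natCast_atTop_atTop.atTop_mul_const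
      (sub_pos.2 (hlt z))).eventually_gt_atTop (Fintype.card κ : ℝ)] with N hN
    linarith
  set c : κ → ℕ := fun q => ⌈N * l q⌉₊
  obtain ⟨z, hz⟩ := h c
  have hNc : (N : ℝ) ≤ ∑ q, (c q : ℝ) :=
    calc (N : ℝ) = ∑ q, N * l q := by rw [← Finset.mul_sum, hl.2, mul_one]
      _ ≤ ∑ q, (c q : ℝ) := Finset.sum_le_sum fun q _ => Nat.le_ceil _
  have hcz : ((fun q => (c q : ℝ)) ᵥ* M) z ≤ N * (l ᵥ* M) z + Fintype.card κ :=
    calc ((fun q => (c q : ℝ)) ᵥ* M) z ≤ ∑ q, (N * l q * M q z + 1) := by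
          refine Finset.sum_le_sum fun q _ => ?_
          have hc := Nat.ceil_lt_add_one (mul_nonneg N.cast_nonneg (hl.1 q))
          nlinarith [hM₀ q z, hM₁ q z, hl.1 q]
      _ = N * (l ᵥ* M) z + Fintype.card κ := by
          simp [Finset.sum_add_distrib, vecMul, dotProduct, Finset.mul_sum, mul_assoc]
  linarith [hN z, mul_le_mul_of_nonneg_left hNc hδ]

end Minimax

section Forward

open Classical

variable {B : Type*} [BooleanAlgebra B] [Nontrivial B] {Q : Set B} {δ : ℝ}

lemma exists_cell_count_le
    (hQ : ∀ n : ℕ, 0 < n → ∀ s : Fin n → B, (∀ i, s i ∈ Q) → δ ≤ (iotaStar s : ℝ) / (n : ℝ))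
    {ι κ : Type*} [Fintype ι] [Fintype κ] {s : ι → B} (r : κ → ι) (hr : ∀ k, s (r k) ∈ Q)
    (c : κ → ℕ) : ∃ g : ι → Bool, cell s g ≠ ⊥ ∧
      δ * ∑ k, (c k : ℝ) ≤ ∑ k, (c k : ℝ) * if cell s g ≤ s (r k) then 1 else 0 := by
  set p : (Σ k, Fin (c k)) → B := fun y => s (r y.1)
  obtain ⟨e, he, hcard⟩ := exists_inf_ne_bot_le_card hQ p fun y => hr y.1
  obtain ⟨g, hg⟩ := exists_cell_inf_ne_bot (s := s) he
  have hle (y) (hy : y ∈ e) : cell s g ≤ p y := by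
    refine (cell_le_or_le_compl g (r y.1)).resolve_right fun hc => hg (eq_bot_iff.2 ?_)
    calc cell s g ⊓ e.inf p ≤ (p y)ᶜ ⊓ p y := inf_le_inf hc (Finset.inf_le hy)
      _ = ⊥ := compl_inf_self _
  refine ⟨g, fun h => hg (by simp [h]), ?_⟩
  calc δ * ∑ k, (c k : ℝ) = δ * Fintype.card (Σ k, Fin (c k)) := by simp
    _ ≤ e.card := hcard
    _ ≤ (Finset.univ.filter fun y => cell s g ≤ p y).card := by
        exact_mod_cast Finset.card_le_card fun y hy =>
          Finset.mem_filter.2 ⟨Finset.mem_univ y, hle y hy⟩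
    _ = ∑ k, (c k : ℝ) * if cell s g ≤ s (r k) then 1 else 0 := by
        rw [Finset.card_filter, ← Finset.univ_sigma_univ, Finset.sum_sigma]
        push_cast
        refine Finset.sum_congr rfl fun k _ => ?_
        split_ifs <;> simp [*]

open Matrix in
lemma exists_isFinAddProbOn_finset (hδ : 0 ≤ δ)
    (hQ : ∀ n : ℕ, 0 < n → ∀ s : Fin n → B, (∀ i, s i ∈ Q) → δ ≤ (iotaStar s : ℝ) / (n : ℝ))
    (t : Finset B) : ∃ μ, IsFinAddProbOn t μ ∧ ∀ q ∈ t, q ∈ Q → δ ≤ μ q := by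
  set s : t → B := (↑)
  let M : Matrix {a : t // s a ∈ Q} {g : t → Bool // cell s g ≠ ⊥} ℝ :=
    fun q g => if cell s g ≤ s q then 1 else 0
  have : Nonempty {g : t → Bool // cell s g ≠ ⊥} := by
    obtain ⟨g, hg⟩ := exists_cell_inf_ne_bot (s := s) (top_ne_bot (α := B))
    exact ⟨g, fun h => hg (by simp [h])⟩
  have hcount (c : {a : t // s a ∈ Q} → ℕ) :
      ∃ g, δ * ∑ q, (c q : ℝ) ≤ ((fun q => (c q : ℝ)) ᵥ* M) g := by
    obtain ⟨g, hg, hle⟩ := exists_cell_count_le hQ Subtype.val (fun q => q.2) c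
    exact ⟨⟨g, hg⟩, hle⟩
  obtain ⟨w, hw, hwM⟩ := exists_mem_stdSimplex_le_mulVec M fun l hl =>
    exists_le_vecMul_of_forall_nat (fun _ _ => by positivity)
      (fun _ _ => by simp only [M]; split_ifs <;> simp) hδ hcount hl
  refine ⟨_, isFinAddProbOn_sum_ite (fun g => g.2) (fun g a ha => ?_) hw, fun q hq hqQ => ?_⟩
  · exact cell_le_or_le_compl g.1 ⟨a, ha⟩
  · simpa [M, mulVec, dotProduct] using hwM ⟨⟨q, hq⟩, hqQ⟩

end Forward

section Limits

variable {B : Type*} [BooleanAlgebra B]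

open Filter Topology in
lemma exists_isFinAddProb_of_forall_finset {Q : Set B} {δ : ℝ}
    (h : ∀ t : Finset B, ∃ μ, IsFinAddProbOn t μ ∧ ∀ q ∈ t, q ∈ Q → δ ≤ μ q) :
    ∃ μ, IsFinAddProb μ ∧ ∀ q ∈ Q, δ ≤ μ q := by
  classical
  choose μ hμ hμQ using h
  -- a cluster point of the net `μ` in the compact cube `[0, 1]^B`
  set U : Ultrafilter (Finset B) := .of atTop
  have hU (s : Finset B) : ∀ᶠ t in (U : Filter (Finset B)), s ⊆ t :=
    Ultrafilter.of_le atTop (eventually_ge_atTop s)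
  obtain ⟨Ξ, hΞ, hlim⟩ := (isCompact_univ_pi fun _ : B => isCompact_Icc
      (a := (0 : ℝ)) (b := 1)).ultrafilter_le_nhds (U.map μ)
    (le_principal_iff.2 (mem_map.2 (Eventually.of_forall fun t b _ => (hμ t).mem_Icc b)))
  have hlim' (b : B) : Tendsto (μ · b) U (𝓝 (Ξ b)) := tendsto_pi_nhds.1 hlim b
  refine ⟨Ξ, ⟨fun b => hΞ b trivial, ?_, fun a _ b _ hab => ?_⟩, fun q hq => ?_⟩
  · exact tendsto_nhds_unique (hlim' ⊤) (tendsto_const_nhds.congr fun t => (hμ t).map_top.symm)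
  · refine tendsto_nhds_unique (hlim' (a ⊔ b)) (((hlim' a).add (hlim' b)).congr' ?_)
    filter_upwards [hU {a, b}] with t ht
    exact ((hμ t).map_sup a (ht (by simp)) b (ht (by simp)) hab).symm
  · refine ge_of_tendsto (hlim' q) ?_
    filter_upwards [hU {q}] with t ht
    exact hμQ t q (ht (by simp)) hq

lemma exists_isFinAddProb_pos_of_forall_pos {μ : ℕ → B → ℝ} (hμ : ∀ n, IsFinAddProb (μ n)) :
    ∃ Ξ, IsFinAddProb Ξ ∧ ∀ n b, 0 < μ n b → 0 < Ξ b := by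
  have hw := hasSum_geometric_two' 1
  have hsum (b : B) : Summable fun n => 1 / 2 / 2 ^ n * μ n b :=
    hw.summable.of_nonneg_of_le (fun n => mul_nonneg (by positivity) ((hμ n).mem_Icc b).1)
      fun n => mul_le_of_le_one_right (by positivity) ((hμ n).mem_Icc b).2
  refine ⟨fun b => ∑' n, 1 / 2 / 2 ^ n * μ n b, ⟨fun b => ⟨?_, ?_⟩, ?_, ?_⟩, fun n b hb => ?_⟩
  · exact tsum_nonneg fun n => mul_nonneg (by positivity) ((hμ n).mem_Icc b).1
  · exact ((hsum b).tsum_le_tsum (fun n => mul_le_of_le_one_right (by positivity)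
      ((hμ n).mem_Icc b).2) hw.summable).trans_eq hw.tsum_eq
  · simpa [(hμ _).map_top] using hw.tsum_eq
  · intro a _ b _ hab
    simp_rw [(hμ _).map_sup_of_inf_eq_bot hab, mul_add]
    exact (hsum a).tsum_add (hsum b)
  · exact (hsum b).tsum_pos (fun n => mul_nonneg (by positivity) ((hμ n).mem_Icc b).1) n
      (mul_pos (by positivity) hb)

end Limits

end Kelley

/-- Kelley. For a Boolean algebra `𝔹`, `𝔹 ∖ {0}` is the union of
countably many subsets each with positive intersection number iff there is a strictly
positive finitely additive measure `Ξ : 𝔹 → [0,1]` with `Ξ(1) = 1`. -/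
theorem stmt14 {B : Type u} [BooleanAlgebra B] [Nontrivial B] :
    (∃ Q : ℕ → Set B, (⋃ n, Q n) = { b : B | b ≠ ⊥ } ∧
      ∀ n, PosIntersectionNumber (Q n)) ↔
    (∃ Ξ : B → ℝ, (∀ b, Ξ b ∈ Set.Icc (0 : ℝ) 1) ∧ Ξ ⊤ = 1 ∧
      (∀ a b, a ⊓ b = ⊥ → Ξ (a ⊔ b) = Ξ a + Ξ b) ∧
      (∀ b, Ξ b = 0 ↔ b = ⊥)) := by
  constructor
  · rintro ⟨Q, hQ, hpos⟩
    choose δ hδ hδQ using hpos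
    choose μ hμ hμQ using fun n => Kelley.exists_isFinAddProb_of_forall_finset
      (Kelley.exists_isFinAddProbOn_finset (hδ n).le (hδQ n))
    obtain ⟨Ξ, hΞ, hΞpos⟩ := Kelley.exists_isFinAddProb_pos_of_forall_pos hμ
    refine ⟨Ξ, hΞ.mem_Icc, hΞ.map_top, fun a b => hΞ.map_sup_of_inf_eq_bot,
      fun b => ⟨fun h0 => ?_, fun hb => hb ▸ hΞ.map_bot⟩⟩
    by_contra hb
    obtain ⟨n, hn⟩ := Set.mem_iUnion.1 (hQ ▸ hb : b ∈ ⋃ n, Q n)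
    exact (hΞpos n b ((hδ n).trans_le (hμQ n b hn))).ne' h0
  · rintro ⟨Ξ, hIcc, htop, hadd, hzero⟩
    have hΞ : Kelley.IsFinAddProb Ξ := ⟨hIcc, htop, fun a _ b _ => hadd a b⟩
    refine ⟨fun n => {b | 1 / ((n : ℝ) + 1) ≤ Ξ b}, ?_,
      fun n => hΞ.posIntersectionNumber Nat.one_div_pos_of_nat⟩
    ext b
    simp only [Set.mem_iUnion, Set.mem_ofPred_eq]
    refine ⟨fun ⟨n, hn⟩ hb => ?_, fun hb => ?_⟩
    · exact (Nat.one_div_pos_of_nat.trans_le hn).ne' ((hzero b).2 hb)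
    · obtain ⟨n, hn⟩ := exists_nat_one_div_lt ((hIcc b).1.lt_of_ne (Ne.symm (mt (hzero b).1 hb)))
      exact ⟨n, hn.le⟩
end

section
/- (Bartoszyński–Shelah) Let E be the ideal of subsets of ℝ generated by the F_σ Lebesgue-measure-zero sets, M the meager ideal on ℝ, and N the Lebesgue null ideal on ℝ. Then min{𝔟, non(N)} ≤ non(E) ≤ min{non(M), non(N)} and max{cov(M), cov(N)} ≤ cov(E) ≤ max{𝔡, cov(N)}, where 𝔟 and 𝔡 are the unbounding and dominating numbers of ⟨ω^ω, ≤*⟩. -/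
open Cardinal

universe u v

/-- The ideal `E` generated by the `F_σ` Lebesgue-measure-zero subsets of `ℝ`:
`A ∈ E` iff `A` is contained in an `F_σ` set of Lebesgue measure zero. -/
def idealE : Set (Set ℝ) :=
  { A | ∃ B : Set ℝ, (∃ F : ℕ → Set ℝ, (∀ n, IsClosed (F n)) ∧ B = ⋃ n, F n) ∧
      MeasureTheory.volume B = 0 ∧ A ⊆ B }

/-- The ideal of meager subsets of `ℝ`. -/
def meagerSetsR : Set (Set ℝ) :=
  { A | IsMeagre A }

/-- The ideal of Lebesgue-null subsets of `ℝ`. -/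
def nullSets : Set (Set ℝ) :=
  { A | MeasureTheory.volume A = 0 }

/-- The eventual-domination relation `x ≤* y` on `ω^ω`. -/
def DomRel : (ℕ → ℕ) → (ℕ → ℕ) → Prop :=
  fun x y => ∃ m : ℕ, ∀ n ≥ m, x n ≤ y n

/-!
Most of the inequalities come from `E ⊆ M` and `E ⊆ N`. The other two rest on a Tukey connection
from a null set `A` to `(ω^ω, ≤*)`: choose open `Uₙ ⊇ A` with `λ(Uₙ) → 0` and write each `Uₙ` as an
increasing union of closed sets `F n k`. A point `x ∈ A` is coded by some `n ↦ k` with `x ∈ F n k`,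
and a bound `g` is sent to the `F_σ` null set `⋃ₘ ⋂_{n ≥ m} F n (g n)`, which contains every point
whose code is `≤* g`. So a set outside `E` is either non-null or has an unbounded set of codes,
and `E` is covered by `𝔡 · cov(N)` of its members.
-/

open MeasureTheory Set Filter Topology ENNReal

section CardinalInvariants

variable {X : Type u} {I J : Set (Set X)}

theorem nonIdeal_le_nonIdeal_of_subset (hIJ : I ⊆ J) (hJ : Set.univ ∉ J) :
    nonIdeal I ≤ nonIdeal J :=
  csInf_le_csInf' ⟨_, Set.univ, hJ, rfl⟩ fun _ ⟨F, hF, hc⟩ => ⟨F, fun h => hF (hIJ h), hc⟩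

theorem covIdeal_le_covIdeal_of_subset (hIJ : I ⊆ J) (hI : ∃ C ⊆ I, ⋃₀ C = Set.univ) :
    covIdeal J ≤ covIdeal I := by
  obtain ⟨C, hCI, hC⟩ := hI
  exact csInf_le_csInf' ⟨_, C, hCI, hC, rfl⟩
    fun _ ⟨C', hC'I, hC', hc⟩ => ⟨C', hC'I.trans hIJ, hC', hc⟩

theorem aleph0_le_covIdeal (hI : ∃ C ⊆ I, ⋃₀ C = Set.univ)
    (hσ : ∀ C ⊆ I, C.Countable → ⋃₀ C ∈ I) (huniv : Set.univ ∉ I) : ℵ₀ ≤ covIdeal I := by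
  obtain ⟨C, hCI, hC⟩ := hI
  refine le_csInf ⟨_, C, hCI, hC, rfl⟩ fun _ ⟨C', hC'I, hC', hc⟩ => hc ▸ ?_
  by_contra! hfin
  exact huniv (hC' ▸ hσ C' hC'I (Cardinal.lt_aleph0_iff_set_finite.mp hfin).countable)

variable {Y : Type u} {Z : Type*} {r : Y → Z → Prop}

abbrev IsTukeyCovered (I : Set (Set X)) (r : Y → Z → Prop) (A : Set X) : Prop :=
  TukeyLE (fun (x : A) (B : I) => (x : X) ∈ (B : Set X)) r

theorem min_bNum_nonIdeal_le_nonIdeal (hI : IsLowerSet I) (huniv : Set.univ ∉ I)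
    (hJI : ∀ A ∈ J, IsTukeyCovered I r A) : min (bNum r) (nonIdeal J) ≤ nonIdeal I := by
  refine le_csInf ⟨_, Set.univ, huniv, rfl⟩ fun _ ⟨F, hF, hc⟩ => hc ▸ ?_
  by_cases hFJ : F ∈ J
  · obtain ⟨f, g, hfg⟩ := hJI F hFJ
    have hunb : RUnbounded r (range f) := by
      rintro ⟨z, hz⟩
      exact hF <| hI (fun x hx => hfg ⟨x, hx⟩ z (hz _ (mem_range_self _))) (g z).2
    have hb : bNum r ≤ #(range f) := csInf_le' ⟨range f, hunb, rfl⟩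
    exact (min_le_left _ _).trans <| hb.trans Cardinal.mk_range_le
  · have hn : nonIdeal J ≤ #F := csInf_le' ⟨F, hFJ, rfl⟩
    exact (min_le_right _ _).trans hn

end CardinalInvariants

section CovBound

variable {X Y Z : Type u} {r : Y → Z → Prop} {I J : Set (Set X)}

theorem covIdeal_le_mk_mul_mk {C : Set (Set X)} {D : Set Z} (hC : ⋃₀ C = Set.univ)
    (hCI : ∀ A ∈ C, IsTukeyCovered I r A) (hD : RDominating r D) :
    covIdeal I ≤ #C * #D := by
  choose f g hfg using fun A : C => hCI A.1 A.2
  have hcover : ⋃₀ range (fun p : C × D => (g p.1 p.2 : Set X)) = Set.univ := by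
    refine eq_univ_of_forall fun x => ?_
    obtain ⟨A, hAC, hxA⟩ := mem_sUnion.mp (hC.symm ▸ mem_univ x)
    obtain ⟨z, hzD, hz⟩ := hD (f ⟨A, hAC⟩ ⟨x, hxA⟩)
    exact ⟨_, ⟨(⟨A, hAC⟩, ⟨z, hzD⟩), rfl⟩, hfg _ _ _ hz⟩
  calc covIdeal I ≤ #(range fun p : C × D => (g p.1 p.2 : Set X)) :=
        csInf_le' ⟨_, by rintro _ ⟨p, rfl⟩; exact (g p.1 p.2).2, hcover, rfl⟩
    _ ≤ #(C × D) := Cardinal.mk_range_le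
    _ = #C * #D := by rw [Cardinal.mk_prod, Cardinal.lift_id, Cardinal.lift_id]

theorem covIdeal_le_max_dNum_covIdeal (hJ : ∃ C ⊆ J, ⋃₀ C = Set.univ) (hJ0 : ℵ₀ ≤ covIdeal J)
    (hr : ∃ D, RDominating r D) (hJI : ∀ A ∈ J, IsTukeyCovered I r A) :
    covIdeal I ≤ max (dNum r) (covIdeal J) := by
  obtain ⟨C, hCJ, hC, hCcard⟩ := csInf_mem (s := {c | ∃ C ⊆ J, ⋃₀ C = Set.univ ∧ c = #C})
    (let ⟨C, hCJ, hC⟩ := hJ; ⟨_, C, hCJ, hC, rfl⟩)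
  obtain ⟨D, hD, hDcard⟩ := csInf_mem (s := {c | ∃ D : Set Z, RDominating r D ∧ c = #D})
    (let ⟨D, hD⟩ := hr; ⟨_, D, hD, rfl⟩)
  calc covIdeal I ≤ #C * #D := covIdeal_le_mk_mul_mk hC (fun A hA => hJI A (hCJ hA)) hD
    _ = covIdeal J * dNum r := by rw [← hCcard, ← hDcard]; rfl
    _ ≤ max (dNum r) (covIdeal J) := by
      rw [mul_comm]
      exact (Cardinal.mul_le_max _ _).trans (max_le le_rfl (hJ0.trans (le_max_right _ _)))

end CovBound

section NullSets

variable {α : Type*} [MeasurableSpace α] {μ : Measure α}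

theorem exists_isOpen_superset_tendsto_measure_zero [TopologicalSpace α] [μ.OuterRegular]
    {A : Set α} (hA : μ A = 0) :
    ∃ U : ℕ → Set α, (∀ n, IsOpen (U n)) ∧ (∀ n, A ⊆ U n) ∧
      Tendsto (fun n => μ (U n)) atTop (𝓝 0) := by
  have hpos (n : ℕ) : μ A < (n : ℝ≥0∞)⁻¹ := hA ▸ ENNReal.inv_pos.2 (ENNReal.natCast_ne_top n)
  choose U hAU hUo hUμ using fun n => A.exists_isOpen_lt_of_lt _ (hpos n)
  exact ⟨U, hUo, hAU, tendsto_of_tendsto_of_tendsto_of_le_of_le tendsto_const_nhds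
    ENNReal.tendsto_inv_nat_nhds_zero (fun _ => bot_le) fun n => (hUμ n).le⟩

theorem measure_eq_zero_of_eventually_subset {s : Set α} {U : ℕ → Set α}
    (hU : Tendsto (fun n => μ (U n)) atTop (𝓝 0)) (hs : ∀ᶠ n in atTop, s ⊆ U n) : μ s = 0 :=
  le_zero_iff.mp <| ge_of_tendsto hU <| hs.mono fun _ h => measure_mono h

end NullSets

theorem isLowerSet_idealE : IsLowerSet idealE :=
  fun _ _ hBA ⟨C, hC, hC0, hAC⟩ => ⟨C, hC, hC0, hBA.trans hAC⟩

theorem idealE_subset_nullSets : idealE ⊆ nullSets :=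
  fun _ ⟨_, _, hB0, hAB⟩ => measure_mono_null hAB hB0

theorem idealE_subset_meagerSetsR : idealE ⊆ meagerSetsR := by
  rintro A ⟨B, ⟨F, hFc, rfl⟩, hB0, hAB⟩
  exact IsMeagre.mono hAB <| isMeagre_iUnion fun n =>
    (IsNowhereDense.of_isClosed_null (hFc n) (measure_mono_null (subset_iUnion F n) hB0)).isMeagre

theorem exists_subset_idealE_sUnion_eq_univ : ∃ C ⊆ idealE, ⋃₀ C = Set.univ := by
  refine ⟨range fun x : ℝ => {x}, ?_, by rw [sUnion_range, iUnion_of_singleton]⟩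
  rintro _ ⟨x, rfl⟩
  exact ⟨{x}, ⟨fun _ => {x}, fun _ => isClosed_singleton, iUnion_const _ |>.symm⟩,
    Real.volume_singleton, subset_rfl⟩

theorem univ_notMem_nullSets : Set.univ ∉ nullSets := by
  simp [nullSets]

theorem univ_notMem_meagerSetsR : Set.univ ∉ meagerSetsR := fun h =>
  (compl_univ (α := ℝ) ▸ dense_of_mem_residual h).nonempty.ne_empty rfl

theorem sUnion_mem_nullSets {C : Set (Set ℝ)} (hC : C ⊆ nullSets) (hCc : C.Countable) :
    ⋃₀ C ∈ nullSets :=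
  (measure_sUnion_null_iff hCc).2 hC

theorem rDominating_domRel_univ : RDominating DomRel Set.univ :=
  fun x => ⟨x, mem_univ x, 0, fun _ _ => le_rfl⟩

theorem isTukeyCovered_idealE_domRel {A : Set ℝ} (hA : volume A = 0) :
    IsTukeyCovered idealE DomRel A := by
  obtain ⟨U, hUo, hAU, hUμ⟩ := exists_isOpen_superset_tendsto_measure_zero hA
  choose F hFc hFU hFUn hFmono using fun n => (hUo n).exists_iUnion_isClosed
  have hA_mem (n : ℕ) {x : ℝ} (hx : x ∈ A) : ∃ k, x ∈ F n k :=
    mem_iUnion.mp <| (hFUn n).symm ▸ hAU n hx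
  choose f hf using fun (x : A) n => hA_mem n x.2
  let T (g : ℕ → ℕ) (m : ℕ) : Set ℝ := ⋂ n ≥ m, F n (g n)
  have hT_null (g : ℕ → ℕ) (m : ℕ) : volume (T g m) = 0 :=
    measure_eq_zero_of_eventually_subset hUμ <| eventually_atTop.2
      ⟨m, fun n hn => (biInter_subset_of_mem hn).trans (hFU n (g n))⟩
  refine ⟨f, fun g => ⟨⋃ m, T g m, ⟨⋃ m, T g m, ⟨T g, ?_, rfl⟩, ?_, subset_rfl⟩⟩, ?_⟩
  · exact fun m => isClosed_biInter fun n _ => hFc n (g n)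
  · exact measure_iUnion_null (hT_null g)
  · rintro x g ⟨m, hm⟩
    exact mem_iUnion.2 ⟨m, mem_iInter₂.2 fun n hn => hFmono n (hm n hn) (hf x n)⟩

/-- Bartoszyński–Shelah.
`min{𝔟, non(N)} ≤ non(E) ≤ min{non(M), non(N)}` and
`max{cov(M), cov(N)} ≤ cov(E) ≤ max{𝔡, cov(N)}`. -/
theorem stmt17 :
    min (bNum DomRel) (nonIdeal nullSets) ≤ nonIdeal idealE ∧
    nonIdeal idealE ≤ min (nonIdeal meagerSetsR) (nonIdeal nullSets) ∧
    max (covIdeal meagerSetsR) (covIdeal nullSets) ≤ covIdeal idealE ∧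
    covIdeal idealE ≤ max (dNum DomRel) (covIdeal nullSets) := by
  have hEN := idealE_subset_nullSets
  have hEM := idealE_subset_meagerSetsR
  have hEcov := exists_subset_idealE_sUnion_eq_univ
  have hNcov : ∃ C ⊆ nullSets, ⋃₀ C = Set.univ :=
    let ⟨C, hCE, hC⟩ := hEcov; ⟨C, hCE.trans hEN, hC⟩
  have hTukey : ∀ A ∈ nullSets, IsTukeyCovered idealE DomRel A :=
    fun _ hA => isTukeyCovered_idealE_domRel hA
  refine ⟨?_, ?_, ?_, ?_⟩
  · exact min_bNum_nonIdeal_le_nonIdeal isLowerSet_idealE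
      (fun h => univ_notMem_nullSets (hEN h)) hTukey
  · exact le_min (nonIdeal_le_nonIdeal_of_subset hEM univ_notMem_meagerSetsR)
      (nonIdeal_le_nonIdeal_of_subset hEN univ_notMem_nullSets)
  · exact max_le (covIdeal_le_covIdeal_of_subset hEM hEcov)
      (covIdeal_le_covIdeal_of_subset hEN hEcov)
  · exact covIdeal_le_max_dNum_covIdeal hNcov
      (aleph0_le_covIdeal hNcov (fun _ => sUnion_mem_nullSets) univ_notMem_nullSets)
      ⟨_, rDominating_domRel_univ⟩ hTukey
end

section
/- Let E be the ideal of subsets of ℝ generated by the F_σ Lebesgue-measure-zero sets, C_E = ⟨ℝ, E, ∈⟩, and Spl = ⟨[ω]^{ℵ₀}, [ω]^{ℵ₀}, ⊏^{nsp}⟩ where a ⊏^{nsp} b iff b ⊆* a or b ⊆* ω∖a (i.e., a does not split b). Then C_E ≼_T Spl. Consequently, 𝔰 ≤ non(E) and cov(E) ≤ 𝔯, where 𝔰 = 𝔟(Spl) is the splitting number and 𝔯 = 𝔡(Spl) is the reaping number. -/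
open Cardinal

universe u v

/-- The set `[ω]^{ℵ₀}` of infinite subsets of `ℕ`. -/
def InfSubsetT : Type :=
  { a : Set ℕ // a.Infinite }

/-- The non-splitting relation of `Spl`: `a ⊏^{nsp} b` iff `b ⊆* a` or `b ⊆* ω ∖ a`,
i.e. `a` does not split `b`. -/
def SplRel : InfSubsetT → InfSubsetT → Prop :=
  fun a b => (b.1 \ a.1).Finite ∨ (b.1 ∩ a.1).Finite

/-!
Send `x ∈ ℝ` to `a_x = {2n | cₙ = 1} ∪ {2n + 1 | cₙ = 0}`, where `c` is the sequence of binary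
digits of `x`. If `a_x` does not split an infinite `b`, then on the infinite set
`S = {n | b meets {2n, 2n + 1}}` the digits of `x` eventually agree with `n ↦ [2n ∈ b]` or with its
negation. For a fixed `S` and pattern, the points of `[0, 1)` following the pattern on `S` lie in a
closed set covered, for every `N`, by dyadic intervals of total length `2⁻ᴺ`; countably many
integer translates of such sets form an `F_σ` null set. So `{x | a_x does not split b} ∈ E`, which
is the Tukey connection; `𝔰 ≤ non(E)` and `cov(E) ≤ 𝔯` are its standard consequences.
-/

open Cardinal MeasureTheory Set Filter
open scoped ENNReal

section Tukey

variable {X X' : Type u} {Y Y' : Type v} {r : X → Y → Prop} {r' : X' → Y' → Prop}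

theorem bNum_le_mk {F : Set X} (hF : RUnbounded r F) : bNum r ≤ #F :=
  csInf_le' ⟨F, hF, rfl⟩

theorem dNum_le_mk {E : Set Y} (hE : RDominating r E) : dNum r ≤ #E :=
  csInf_le' ⟨E, hE, rfl⟩

theorem TukeyLE.bNum_le (h : TukeyLE r r') (hr : ∃ F, RUnbounded r F) : bNum r' ≤ bNum r := by
  obtain ⟨f, g, hfg⟩ := h
  obtain ⟨F₀, hF₀⟩ := hr
  refine le_csInf ⟨_, F₀, hF₀, rfl⟩ ?_
  rintro _ ⟨F, hF, rfl⟩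
  refine (bNum_le_mk (F := f '' F) fun ⟨y', hy'⟩ => hF ⟨g y', fun x hx => ?_⟩).trans mk_image_le
  exact hfg x y' (hy' _ (mem_image_of_mem f hx))

theorem TukeyLE.dNum_le (h : TukeyLE r r') (hr' : ∃ E, RDominating r' E) : dNum r ≤ dNum r' := by
  obtain ⟨f, g, hfg⟩ := h
  obtain ⟨E₀, hE₀⟩ := hr'
  refine le_csInf ⟨_, E₀, hE₀, rfl⟩ ?_
  rintro _ ⟨E, hE, rfl⟩
  refine (dNum_le_mk fun x => ?_).trans (mk_image_le (f := g))
  obtain ⟨y', hy', hxy⟩ := hE (f x)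
  exact ⟨g y', mem_image_of_mem g hy', hfg x y' hxy⟩

end Tukey

section MemRel

variable {X : Type u} {I : Set (Set X)}

theorem rUnbounded_mem_iff (hI : ∀ A ∈ I, ∀ B ⊆ A, B ∈ I) {F : Set X} :
    RUnbounded (fun x (A : I) => x ∈ (A : Set X)) F ↔ F ∉ I :=
  not_congr ⟨fun ⟨A, hA⟩ => hI A A.2 F hA, fun hF => ⟨⟨F, hF⟩, fun _ hx => hx⟩⟩

theorem bNum_mem_eq_nonIdeal (hI : ∀ A ∈ I, ∀ B ⊆ A, B ∈ I) :
    bNum (fun x (A : I) => x ∈ (A : Set X)) = nonIdeal I := by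
  simp only [bNum, nonIdeal, rUnbounded_mem_iff hI]

theorem dNum_mem_eq_covIdeal : dNum (fun x (A : I) => x ∈ (A : Set X)) = covIdeal I := by
  unfold dNum covIdeal
  congr 1
  ext c
  constructor
  · rintro ⟨E, hE, rfl⟩
    refine ⟨(↑) '' E, ?_, ?_, (mk_image_eq Subtype.val_injective).symm⟩
    · rintro _ ⟨A, -, rfl⟩
      exact A.2
    · refine eq_univ_of_forall fun x => ?_
      obtain ⟨A, hA, hx⟩ := hE x
      exact ⟨A, mem_image_of_mem _ hA, hx⟩
  · rintro ⟨C, hC, hU, rfl⟩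
    refine ⟨(↑) ⁻¹' C, fun x => ?_, ?_⟩
    · obtain ⟨A, hA, hx⟩ := mem_sUnion.mp (hU ▸ mem_univ x)
      exact ⟨⟨A, hC hA⟩, hA, hx⟩
    · exact (mk_preimage_of_injective_of_subset_range _ C Subtype.val_injective
        (by rwa [Subtype.range_coe])).symm

end MemRel

theorem mem_idealE_of_subset {A B : Set ℝ} (hB : B ∈ idealE) (h : A ⊆ B) : A ∈ idealE :=
  let ⟨C, hC, hnull, hBC⟩ := hB
  ⟨C, hC, hnull, h.trans hBC⟩

theorem mem_idealE_of_subset_iUnion {ι : Type*} [Countable ι] {A : Set ℝ} (F : ι → Set ℝ)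
    (hclosed : ∀ i, IsClosed (F i)) (hnull : ∀ i, volume (F i) = 0) (hA : A ⊆ ⋃ i, F i) :
    A ∈ idealE := by
  cases isEmpty_or_nonempty ι
  · exact ⟨∅, ⟨fun _ => ∅, fun _ => isClosed_empty, by simp⟩, measure_empty, by simpa using hA⟩
  · obtain ⟨e, he⟩ := exists_surjective_nat ι
    exact ⟨⋃ i, F i, ⟨F ∘ e, fun n => hclosed (e n), (he.iUnion_comp F).symm⟩,
      measure_iUnion_null hnull, hA⟩

theorem iUnion_mem_idealE {ι : Type*} [Countable ι] {A : ι → Set ℝ} (hA : ∀ i, A i ∈ idealE) :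
    ⋃ i, A i ∈ idealE := by
  choose B hB hnull hAB using hA
  choose F hclosed hF using hB
  refine mem_idealE_of_subset_iUnion (fun p : ι × ℕ => F p.1 p.2) (fun p => hclosed _ _)
    (fun p => measure_mono_null ((subset_iUnion _ p.2).trans (hF p.1).ge) (hnull p.1)) ?_
  refine iUnion_subset fun i => (hAB i).trans ((hF i).le.trans (iUnion_subset fun n => ?_))
  exact subset_iUnion (fun p : ι × ℕ => F p.1 p.2) (i, n)

theorem union_mem_idealE {A B : Set ℝ} (hA : A ∈ idealE) (hB : B ∈ idealE) : A ∪ B ∈ idealE := by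
  rw [union_eq_iUnion]
  exact iUnion_mem_idealE (Bool.forall_bool.mpr ⟨hB, hA⟩)

theorem univ_notMem_idealE : (univ : Set ℝ) ∉ idealE := by
  rintro ⟨B, -, hnull, hB⟩
  rw [univ_subset_iff.mp hB, Real.volume_univ] at hnull
  exact ENNReal.top_ne_zero hnull

/-- The `(n+1)`-st binary digit of `x` after the point (`true` for `1`). -/
noncomputable def binDigit (n : ℕ) (x : ℝ) : Bool :=
  decide (⌊x * 2 ^ (n + 1)⌋ % 2 = 1)

theorem binDigit_fract (n : ℕ) (x : ℝ) : binDigit n (Int.fract x) = binDigit n x := by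
  have h : Int.fract x * 2 ^ (n + 1) = x * 2 ^ (n + 1) + ((2 * (-⌊x⌋ * 2 ^ n) : ℤ) : ℝ) := by
    rw [Int.fract]; push_cast; ring
  rw [binDigit, binDigit, h, Int.floor_add_intCast, Int.add_mul_emod_self_left]

theorem binDigit_eq_testBit {L n : ℕ} (hn : n < L) {x : ℝ} (hx : 0 ≤ x) :
    binDigit n x = (⌊x * 2 ^ L⌋₊).testBit (L - 1 - n) := by
  have hscale : x * 2 ^ (n + 1) = x * 2 ^ L / ((2 ^ (L - 1 - n) : ℕ) : ℝ) := by
    rw [eq_div_iff (by positivity), Nat.cast_pow, Nat.cast_ofNat, mul_assoc, ← pow_add]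
    congr 2
    omega
  have hfloor : ⌊x * 2 ^ (n + 1)⌋₊ = ⌊x * 2 ^ L⌋₊ / 2 ^ (L - 1 - n) := by
    rw [hscale, Nat.floor_div_natCast]
  rw [Nat.testBit_eq_decide_div_mod_eq, ← hfloor, binDigit,
    ← Int.natCast_floor_eq_floor (by positivity)]
  norm_cast

theorem card_filter_testBit_eq_le {L : ℕ} {F : Finset ℕ} {p : ℕ → ℕ} (hp : InjOn p F)
    (hpL : ∀ n ∈ F, p n < L) (g : ℕ → Bool) :
    ((Finset.range (2 ^ L)).filter fun k => ∀ n ∈ F, k.testBit (p n) = g n).card ≤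
      2 ^ (L - F.card) := by
  classical
  set P := F.image p
  have hP : P ⊆ Finset.range L := by
    simpa [P, Finset.image_subset_iff] using hpL
  let freeBits (k : ℕ) : (Finset.range L \ P : Finset ℕ) → Bool := fun i => k.testBit i
  calc _ ≤ (Finset.univ : Finset ((Finset.range L \ P : Finset ℕ) → Bool)).card := by
        refine Finset.card_le_card_of_injOn freeBits
          (fun _ _ => Finset.mem_coe.2 (Finset.mem_univ _)) ?_
        intro k hk k' hk' hkk'
        simp only [Finset.coe_filter, Finset.mem_range, mem_ofPred_eq] at hk hk'
        refine Nat.eq_of_testBit_eq fun i => ?_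
        by_cases hiL : i < L
        · by_cases hiP : i ∈ P
          · obtain ⟨n, hn, rfl⟩ := Finset.mem_image.mp hiP
            rw [hk.2 n hn, hk'.2 n hn]
          · exact congrFun hkk' ⟨i, by simp [hiL, hiP]⟩
        · have h2 : 2 ^ L ≤ 2 ^ i := Nat.pow_le_pow_right two_pos (not_lt.mp hiL)
          rw [Nat.testBit_eq_false_of_lt (hk.1.trans_le h2),
            Nat.testBit_eq_false_of_lt (hk'.1.trans_le h2)]
    _ = 2 ^ (L - F.card) := by
        simp [Finset.card_sdiff_of_subset hP, P, Finset.card_image_of_injOn hp]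

/-- Digit `n < L` of `k / 2ᴸ` is bit `L - 1 - n` of `k`. -/
noncomputable def dyadicCylinder (L : ℕ) (F : Finset ℕ) (g : ℕ → Bool) : Set ℝ :=
  ⋃ k ∈ (Finset.range (2 ^ L)).filter (fun k => ∀ n ∈ F, k.testBit (L - 1 - n) = g n),
    Icc (k / 2 ^ L : ℝ) ((k + 1) / 2 ^ L)

section DyadicCylinder

variable {L : ℕ} {F : Finset ℕ} {g : ℕ → Bool}

theorem isClosed_dyadicCylinder : IsClosed (dyadicCylinder L F g) :=
  Set.Finite.isClosed_biUnion (Finset.finite_toSet _) fun _ _ => isClosed_Icc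

theorem mem_dyadicCylinder (hF : F ⊆ Finset.range L) {x : ℝ} (hx : x ∈ Ico 0 1)
    (hg : ∀ n ∈ F, binDigit n x = g n) : x ∈ dyadicCylinder L F g := by
  have hpow : (0 : ℝ) < 2 ^ L := by positivity
  set k := ⌊x * 2 ^ L⌋₊
  have hx0 : 0 ≤ x * 2 ^ L := mul_nonneg hx.1 hpow.le
  have hk : k < 2 ^ L := by
    rw [Nat.floor_lt hx0, Nat.cast_pow, Nat.cast_ofNat]
    exact mul_lt_of_lt_one_left hpow hx.2
  refine mem_biUnion (x := k) ?_ ⟨?_, ?_⟩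
  · simp only [Finset.coe_filter, Finset.mem_range, mem_ofPred_eq]
    exact ⟨hk, fun n hn =>
      (binDigit_eq_testBit (Finset.mem_range.mp (hF hn)) hx.1).symm.trans (hg n hn)⟩
  · rw [div_le_iff₀ hpow]
    exact Nat.floor_le hx0
  · rw [le_div_iff₀ hpow]
    exact (Nat.lt_floor_add_one _).le

theorem volume_dyadicCylinder_le (hF : F ⊆ Finset.range L) :
    volume (dyadicCylinder L F g) ≤ 2⁻¹ ^ F.card := by
  have hcard := card_filter_testBit_eq_le (L := L) (p := fun n => L - 1 - n)
    (fun a ha b hb hab => by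
      have := Finset.mem_range.mp (hF ha); have := Finset.mem_range.mp (hF hb)
      simp only at hab; omega)
    (fun n hn => by have := Finset.mem_range.mp (hF hn); omega) g
  have hIcc (k : ℕ) : volume (Icc (k / 2 ^ L : ℝ) ((k + 1) / 2 ^ L)) = 2⁻¹ ^ L := by
    rw [Real.volume_Icc, ← sub_div, add_sub_cancel_left, one_div, ← inv_pow,
      ENNReal.ofReal_pow (by norm_num), ENNReal.ofReal_inv_of_pos two_pos, ENNReal.ofReal_ofNat]
  have hF_le : F.card ≤ L := by simpa using Finset.card_le_card hF
  calc volume (dyadicCylinder L F g)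
      _ ≤ ∑ k ∈ (Finset.range (2 ^ L)).filter (fun k => ∀ n ∈ F, k.testBit (L - 1 - n) = g n),
          volume (Icc (k / 2 ^ L : ℝ) ((k + 1) / 2 ^ L)) := measure_biUnion_finset_le _ _
      _ ≤ 2 ^ (L - F.card) * 2⁻¹ ^ L := by
        simp only [hIcc, Finset.sum_const, nsmul_eq_mul]
        gcongr
        exact_mod_cast hcard
      _ = 2⁻¹ ^ F.card := by
        rw [← Nat.sub_add_cancel hF_le, pow_add (2⁻¹ : ℝ≥0∞), Nat.add_sub_cancel, ← mul_assoc,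
          ← mul_pow, ENNReal.mul_inv_cancel two_ne_zero ENNReal.ofNat_ne_top, one_pow, one_mul]

end DyadicCylinder

noncomputable def digitCylinder (S : Set ℕ) (g : ℕ → Bool) : Set ℝ :=
  ⋂ (L : ℕ) (F : Finset ℕ) (_ : ↑F ⊆ S ∧ F ⊆ Finset.range L), dyadicCylinder L F g

section DigitCylinder

variable {S : Set ℕ} {g : ℕ → Bool}

theorem isClosed_digitCylinder : IsClosed (digitCylinder S g) :=
  isClosed_iInter fun _ => isClosed_iInter fun _ => isClosed_iInter fun _ =>
    isClosed_dyadicCylinder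

theorem volume_digitCylinder (hS : S.Infinite) : volume (digitCylinder S g) = 0 := by
  refine le_antisymm (ge_of_tendsto' (ENNReal.tendsto_pow_atTop_nhds_zero_of_lt_one
    (ENNReal.inv_lt_one.2 ENNReal.one_lt_two)) fun N => ?_) zero_le
  obtain ⟨F, hFS, rfl⟩ := hS.exists_subset_card_eq N
  obtain ⟨L, hFL⟩ := F.exists_nat_subset_range
  calc volume (digitCylinder S g) ≤ volume (dyadicCylinder L F g) :=
        measure_mono (iInter₂_subset_of_subset L F (iInter_subset _ ⟨hFS, hFL⟩))
    _ ≤ 2⁻¹ ^ F.card := volume_dyadicCylinder_le hFL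

theorem mem_digitCylinder {x : ℝ} (hx : x ∈ Ico 0 1) (hg : ∀ n ∈ S, binDigit n x = g n) :
    x ∈ digitCylinder S g :=
  mem_iInter₂.2 fun _ _ => mem_iInter.2 fun hF =>
    mem_dyadicCylinder hF.2 hx fun n hn => hg n (hF.1 hn)

end DigitCylinder

theorem setOf_forall_binDigit_eq_mem_idealE {S : Set ℕ} (hS : S.Infinite) (g : ℕ → Bool) :
    {x | ∀ n ∈ S, binDigit n x = g n} ∈ idealE := by
  refine mem_idealE_of_subset_iUnion (fun j : ℤ => (· + (j : ℝ)) ⁻¹' digitCylinder S g)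
    (fun _ => isClosed_digitCylinder.preimage (continuous_add_const _))
    (fun _ => by rw [measure_preimage_add_right, volume_digitCylinder hS]) fun x hx => ?_
  have hfract : x + ((-⌊x⌋ : ℤ) : ℝ) = Int.fract x := by
    rw [Int.fract, Int.cast_neg, sub_eq_add_neg]
  refine mem_iUnion.2 ⟨-⌊x⌋, ?_⟩
  rw [mem_preimage, hfract]
  exact mem_digitCylinder ⟨Int.fract_nonneg x, Int.fract_lt_one x⟩
    fun n hn => (binDigit_fract n x).trans (hx n hn)

theorem setOf_eventually_binDigit_eq_mem_idealE {S : Set ℕ} (hS : S.Infinite) (g : ℕ → Bool) :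
    {x | ∀ᶠ n in atTop, n ∈ S → binDigit n x = g n} ∈ idealE := by
  refine mem_idealE_of_subset (iUnion_mem_idealE fun m : ℕ =>
    setOf_forall_binDigit_eq_mem_idealE (hS.sdiff (finite_Iio m)) g) fun x hx => ?_
  obtain ⟨m, hm⟩ := eventually_atTop.mp hx
  exact mem_iUnion.2 ⟨m, fun n hn => hm n (not_lt.mp hn.2) hn.1⟩

/-- `{2n | c n} ∪ {2n + 1 | ¬ c n}`, the code of `c : 2^ω` in `[ω]^{ℵ₀}`. -/
def boolCode (c : ℕ → Bool) : Set ℕ :=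
  {m | c (m / 2) = decide (m % 2 = 0)}

section BoolCode

variable {c : ℕ → Bool} {n : ℕ}

theorem two_mul_mem_boolCode : 2 * n ∈ boolCode c ↔ c n = true := by
  simp [boolCode]

theorem two_mul_add_one_mem_boolCode : 2 * n + 1 ∈ boolCode c ↔ c n = false := by
  simp [boolCode, Nat.add_div_of_dvd_right, Nat.add_mod]

theorem boolCode_infinite (c : ℕ → Bool) : (boolCode c).Infinite := by
  refine infinite_of_injective_forall_mem (f := fun n => bif c n then 2 * n else 2 * n + 1)
    (fun a b hab => ?_) fun n => ?_
  · cases ha : c a <;> cases hb : c b <;> simp only [ha, hb, cond_true, cond_false] at hab <;> omega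
  · cases hn : c n
    · exact two_mul_add_one_mem_boolCode.2 hn
    · exact two_mul_mem_boolCode.2 hn

theorem compl_boolCode : (boolCode c)ᶜ = boolCode fun n => !c n := by
  ext m
  simp [boolCode, Bool.eq_not_iff]

end BoolCode

def pairShadow (b : Set ℕ) : Set ℕ :=
  {n | 2 * n ∈ b ∨ 2 * n + 1 ∈ b}

theorem Set.Infinite.pairShadow {b : Set ℕ} (hb : b.Infinite) : (pairShadow b).Infinite := by
  refine fun hfin => hb (((hfin.image (2 * ·)).union (hfin.image (2 * · + 1))).subset
    fun m hm => ?_)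
  obtain ⟨n, rfl | rfl⟩ := Nat.even_or_odd' m
  · exact Or.inl ⟨n, Or.inl hm, rfl⟩
  · exact Or.inr ⟨n, Or.inr hm, rfl⟩

open Classical in
theorem eventually_eq_of_finite_diff_boolCode {b : Set ℕ} {c : ℕ → Bool}
    (h : (b \ boolCode c).Finite) : ∀ᶠ n in atTop, n ∈ pairShadow b → c n = decide (2 * n ∈ b) := by
  have hcof : ∀ᶠ m in atTop, m ∈ b → m ∈ boolCode c := by
    rw [← Nat.cofinite_eq_atTop]
    filter_upwards [h.eventually_cofinite_notMem] with m hm hmb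
    by_contra hmc
    exact hm ⟨hmb, hmc⟩
  have hmul : Tendsto (fun n => 2 * n) atTop atTop :=
    tendsto_atTop_atTop.2 fun N => ⟨N, fun n hn => by omega⟩
  have hmul_succ : Tendsto (fun n => 2 * n + 1) atTop atTop :=
    tendsto_atTop_atTop.2 fun N => ⟨N, fun n hn => by omega⟩
  filter_upwards [hmul.eventually hcof, hmul_succ.eventually hcof] with n hev hodd hn
  by_cases h2n : 2 * n ∈ b
  · simpa [h2n] using two_mul_mem_boolCode.1 (hev h2n)
  · simpa [h2n] using two_mul_add_one_mem_boolCode.1 (hodd (hn.resolve_left h2n))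

noncomputable def splitCode (x : ℝ) : InfSubsetT :=
  ⟨boolCode (binDigit · x), boolCode_infinite _⟩

open Classical in
theorem setOf_splRel_splitCode_mem_idealE (b : InfSubsetT) :
    {x | SplRel (splitCode x) b} ∈ idealE := by
  have hS := b.2.pairShadow
  refine mem_idealE_of_subset (union_mem_idealE
    (setOf_eventually_binDigit_eq_mem_idealE hS fun n => decide (2 * n ∈ b.1))
    (setOf_eventually_binDigit_eq_mem_idealE hS fun n => !decide (2 * n ∈ b.1))) ?_
  rintro x (h | h)
  · exact Or.inl (eventually_eq_of_finite_diff_boolCode h)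
  · have hneg : (b.1 \ boolCode fun n => !binDigit n x).Finite := by
      rwa [← compl_boolCode, sdiff_compl]
    exact Or.inr ((eventually_eq_of_finite_diff_boolCode hneg).mono fun n hn hnb => by
      simpa using hn hnb)

theorem tukeyLE_idealE_splRel :
    TukeyLE (fun (x : ℝ) (A : idealE) => x ∈ (A : Set ℝ)) SplRel :=
  ⟨splitCode, fun b => ⟨_, setOf_splRel_splitCode_mem_idealE b⟩, fun _ _ h => h⟩

/-- `C_E ≼_T Spl`, and consequently `𝔰 = 𝔟(Spl) ≤ non(E)` and
`cov(E) ≤ 𝔡(Spl) = 𝔯`. -/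
theorem stmt19 :
    TukeyLE (fun (x : ℝ) (A : idealE) => x ∈ (A : Set ℝ)) SplRel ∧
    bNum SplRel ≤ nonIdeal idealE ∧
    covIdeal idealE ≤ dNum SplRel := by
  have hE : ∀ A ∈ idealE, ∀ B ⊆ A, B ∈ idealE := fun _ hA _ hBA => mem_idealE_of_subset hA hBA
  refine ⟨tukeyLE_idealE_splRel, ?_, ?_⟩
  · rw [← bNum_mem_eq_nonIdeal hE]
    exact tukeyLE_idealE_splRel.bNum_le ⟨univ, (rUnbounded_mem_iff hE).2 univ_notMem_idealE⟩
  · rw [← dNum_mem_eq_covIdeal]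
    exact tukeyLE_idealE_splRel.dNum_le ⟨univ, fun a => ⟨a, mem_univ a, Or.inl (by simp)⟩⟩
end
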